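/- arXiv:1507.08582 — 3 statements merged into one kernel-verified Lean document; each statement's English description precedes it below -/
import Mathlib

section
/- If a one-way deterministic Turing machine with a separate read-only one-way input tape and a work tape recognizes a nonregular language, then its work-tape space complexity s(n) satisfies s(n) ∉ o(log n). -/
/-- A deterministic Turing machine with a separate read-only input tape (with
end-markers, read as `none`) and a semi-infinite read-write work tape.
Head moves are given by `Ordering`: `lt` = left, `eq` = stay, `gt` = right. -/
structure OfflineTM (α : Type) : Type 1 where
  Q : Type
  [finQ : Fintype Q]
  /-- work tape alphabet -/
  Γ : Type
  [finΓ : Fintype Γ]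
  blank : Γ
  init : Q
  accept : Q
  /-- transition: state, scanned input symbol (`none` on an end-marker), scanned work
  symbol ↦ new state, written work symbol, input head move, work head move
  (`none` = halt). -/
  trans : Q → Option α → Γ → Option (Q × Γ × Ordering × Ordering)

namespace OfflineTM

variable {α : Type} (M : OfflineTM α)

/-- A configuration: state, input head position (in `[0, |w|+1]`), work tape content,
and work head position. -/
structure Cfg (M : OfflineTM α) where
  q : M.Q
  ipos : ℕ
  tape : ℕ → M.Γ
  wpos : ℕ

/-- The symbol of the input tape `⊳ w ⊲` scanned at position `i`
(`none` stands for an end-marker). -/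
def readInp (w : List α) (i : ℕ) : Option α :=
  if i = 0 then none else w[i - 1]?

/-- Apply a head move, truncated at the left end. -/
def mv (n : ℕ) : Ordering → ℕ
  | .lt => n - 1
  | .eq => n
  | .gt => n + 1

/-- The initial configuration on input `w`. -/
def initCfg (w : List α) : Cfg M := ⟨M.init, 1, fun _ => M.blank, 0⟩

/-- One computation step on input `w`. -/
def Step (w : List α) : Cfg M → Cfg M → Prop := fun c c' =>
  ∃ r, M.trans c.q (readInp w c.ipos) (c.tape c.wpos) = some r ∧
    c' = ⟨r.1, min (mv c.ipos r.2.2.1) (w.length + 1),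
          Function.update c.tape c.wpos r.2.1, mv c.wpos r.2.2.2⟩

/-- The language recognized by `M`. -/
def lang : Language α :=
  { w | ∃ c : Cfg M, Relation.ReflTransGen (M.Step w) (M.initCfg w) c ∧ c.q = M.accept }

/-- `M` is one-way: the input head never moves to the left. -/
def OneWay : Prop := ∀ q a g r, M.trans q a g = some r → r.2.2.1 ≠ Ordering.lt

/-- `s` bounds the work-tape space used by `M`: on every input of length `n`,
every reachable configuration uses only work cells with index `< s n`. -/
def SpaceBound (s : ℕ → ℕ) : Prop :=
  ∀ (w : List α) (c : Cfg M), Relation.ReflTransGen (M.Step w) (M.initCfg w) c →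
    c.wpos < s w.length

end OfflineTM

namespace OfflineTM

variable {α : Type} (M : OfflineTM α)

def stepF (w : List α) (c : M.Cfg) : Option M.Cfg :=
  (M.trans c.q (readInp w c.ipos) (c.tape c.wpos)).map fun r =>
    ⟨r.1, min (mv c.ipos r.2.2.1) (w.length + 1),
      Function.update c.tape c.wpos r.2.1, mv c.wpos r.2.2.2⟩

theorem step_iff {w : List α} {c c' : M.Cfg} : M.Step w c c' ↔ M.stepF w c = some c' := by
  simp only [Step, stepF, Option.map_eq_some_iff]
  constructor
  · rintro ⟨r, hr, rfl⟩; exact ⟨r, hr, rfl⟩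
  · rintro ⟨r, hr, rfl⟩; exact ⟨r, hr, rfl⟩

def runFrom (w : List α) (c : M.Cfg) : ℕ → Option M.Cfg
  | 0 => some c
  | t+1 => (runFrom w c t).bind (M.stepF w)

@[simp] theorem runFrom_zero (w : List α) (c : M.Cfg) : M.runFrom w c 0 = some c := rfl

theorem runFrom_succ (w : List α) (c : M.Cfg) (t : ℕ) :
    M.runFrom w c (t+1) = (M.runFrom w c t).bind (M.stepF w) := rfl

theorem runFrom_add (w : List α) (c : M.Cfg) (a b : ℕ) :
    M.runFrom w c (a + b) = (M.runFrom w c a).bind fun c' => M.runFrom w c' b := by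
  induction b with
  | zero => cases h : M.runFrom w c a <;> simp [h]
  | succ b ih =>
    show M.runFrom w c ((a + b) + 1) = _
    rw [runFrom_succ, ih]
    cases h : M.runFrom w c a <;> simp [runFrom_succ]

theorem runFrom_some_of_le {w : List α} {c : M.Cfg} {t t' : ℕ} (h : t ≤ t') {c₂ : M.Cfg}
    (h₂ : M.runFrom w c t' = some c₂) : ∃ c₁, M.runFrom w c t = some c₁ := by
  rw [show t' = t + (t' - t) by omega, runFrom_add] at h₂
  cases h1 : M.runFrom w c t with
  | none => rw [h1] at h₂; simp at h₂
  | some c₁ => exact ⟨c₁, rfl⟩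

def Reach (w : List α) (c : M.Cfg) : Prop := ∃ t, M.runFrom w (M.initCfg w) t = some c

theorem reach_iff {w : List α} {c : M.Cfg} :
    Relation.ReflTransGen (M.Step w) (M.initCfg w) c ↔ M.Reach w c := by
  constructor
  · intro h
    induction h with
    | refl => exact ⟨0, rfl⟩
    | tail _ hbc ih =>
      obtain ⟨t, ht⟩ := ih
      exact ⟨t + 1, by rw [runFrom_succ, ht]; simpa using (M.step_iff).mp hbc⟩
  · rintro ⟨t, ht⟩
    induction t generalizing c with
    | zero => simp at ht; subst ht; rfl
    | succ t ih =>
      rw [runFrom_succ] at ht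
      obtain ⟨c₁, h₁, h₂⟩ := Option.bind_eq_some_iff.mp ht
      exact Relation.ReflTransGen.tail (ih h₁) ((M.step_iff).mpr h₂)

theorem mem_lang_iff {w : List α} :
    w ∈ M.lang ↔ ∃ c, M.Reach w c ∧ c.q = M.accept := by
  show (∃ c : M.Cfg, Relation.ReflTransGen (M.Step w) (M.initCfg w) c ∧ c.q = M.accept) ↔ _
  constructor
  · rintro ⟨c, h1, h2⟩; exact ⟨c, (M.reach_iff).mp h1, h2⟩
  · rintro ⟨c, h1, h2⟩; exact ⟨c, (M.reach_iff).mpr h1, h2⟩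

theorem mv_le (n : ℕ) (o : Ordering) : mv n o ≤ n + 1 := by
  cases o <;> simp only [mv] <;> omega

theorem le_mv {n : ℕ} {o : Ordering} (h : o ≠ Ordering.lt) : n ≤ mv n o := by
  cases o with
  | lt => exact absurd rfl h
  | eq => exact le_rfl
  | gt => exact Nat.le_succ n

theorem stepF_mono (h1 : M.OneWay) {w : List α} {c c' : M.Cfg}
    (h : M.stepF w c = some c') (hc : c.ipos ≤ w.length + 1) :
    c.ipos ≤ c'.ipos ∧ c'.ipos ≤ c.ipos + 1 ∧ c'.ipos ≤ w.length + 1 ∧ c'.wpos ≤ c.wpos + 1 := by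
  unfold stepF at h
  rw [Option.map_eq_some_iff] at h
  obtain ⟨r, hr, rfl⟩ := h
  have hne := h1 _ _ _ _ hr
  refine ⟨le_min (le_mv hne) hc, ?_, min_le_right _ _, mv_le _ _⟩
  exact le_trans (min_le_left _ _) (mv_le _ _)

theorem runFrom_inv (h1 : M.OneWay) {w : List α} {c : M.Cfg} {t : ℕ} {c₂ : M.Cfg}
    (h : M.runFrom w c t = some c₂) (hc : c.ipos ≤ w.length + 1) :
    c.ipos ≤ c₂.ipos ∧ c₂.ipos ≤ w.length + 1 := by
  induction t generalizing c₂ with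
  | zero => simp at h; subst h; exact ⟨le_rfl, hc⟩
  | succ t ih =>
    rw [runFrom_succ] at h
    obtain ⟨c₁, hc₁, hst⟩ := Option.bind_eq_some_iff.mp h
    obtain ⟨ha, hb⟩ := ih hc₁
    obtain ⟨h3, _, h5, _⟩ := M.stepF_mono h1 hst hb
    exact ⟨le_trans ha h3, h5⟩

theorem runFrom_mono_t (h1 : M.OneWay) {w : List α} {c : M.Cfg} {t t' : ℕ} (h : t ≤ t')
    {c₁ c₂ : M.Cfg} (ht : M.runFrom w c t = some c₁) (ht' : M.runFrom w c t' = some c₂)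
    (hc : c.ipos ≤ w.length + 1) : c₁.ipos ≤ c₂.ipos := by
  rw [show t' = t + (t' - t) by omega, runFrom_add, ht] at ht'
  simp only [Option.bind_some] at ht'
  exact (M.runFrom_inv h1 ht' (M.runFrom_inv h1 ht hc).2).1

theorem exists_firstHit (h1 : M.OneWay) {w : List α} {T : ℕ} {cT : M.Cfg}
    (hT : M.runFrom w (M.initCfg w) T = some cT) {v : ℕ} (hv1 : 1 ≤ v) (hv2 : v ≤ cT.ipos) :
    ∃ t ≤ T, ∃ c, M.runFrom w (M.initCfg w) t = some c ∧ c.ipos = v ∧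
      ∀ t' c', t' < t → M.runFrom w (M.initCfg w) t' = some c' → c'.ipos < v := by
  classical
  have hP : ∃ t, ∃ c, M.runFrom w (M.initCfg w) t = some c ∧ v ≤ c.ipos := ⟨T, cT, hT, hv2⟩
  have htT : Nat.find hP ≤ T := Nat.find_le ⟨cT, hT, hv2⟩
  obtain ⟨c₀, hc₀, hvle⟩ := Nat.find_spec hP
  have hmin : ∀ t' c', t' < Nat.find hP → M.runFrom w (M.initCfg w) t' = some c' → c'.ipos < v := by
    intro t' c' hlt hrun
    by_contra hge
    exact Nat.find_min hP hlt ⟨c', hrun, by omega⟩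
  refine ⟨Nat.find hP, htT, c₀, hc₀, ?_, hmin⟩
  cases hfind : Nat.find hP with
  | zero =>
    rw [hfind] at hc₀
    simp at hc₀
    subst hc₀
    simp only [initCfg] at hvle ⊢
    omega
  | succ t =>
    rw [hfind, runFrom_succ] at hc₀
    obtain ⟨c₁, h₁, h₂⟩ := Option.bind_eq_some_iff.mp hc₀
    have hlt : c₁.ipos < v := hmin t c₁ (by omega) h₁
    have := M.stepF_mono h1 h₂ (M.runFrom_inv h1 h₁ (by simp [initCfg])).2
    omega

theorem runFrom_blank {w : List α} {c : M.Cfg} {t : ℕ} {c₂ : M.Cfg} {S : ℕ}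
    (h : M.runFrom w c t = some c₂) (hb : ∀ i, S ≤ i → c.tape i = M.blank)
    (hw : ∀ t' c', t' < t → M.runFrom w c t' = some c' → c'.wpos < S) :
    ∀ i, S ≤ i → c₂.tape i = M.blank := by
  induction t generalizing c₂ with
  | zero => simp at h; subst h; exact hb
  | succ t ih =>
    rw [runFrom_succ] at h
    obtain ⟨c₁, hc₁, hst⟩ := Option.bind_eq_some_iff.mp h
    have hb₁ := ih hc₁ (fun t' c' h' => hw t' c' (by omega))
    unfold stepF at hst
    rw [Option.map_eq_some_iff] at hst
    obtain ⟨r, hr, rfl⟩ := hst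
    intro i hi
    have hwlt : c₁.wpos < S := hw t c₁ (by omega) hc₁
    simp only [Function.update_apply]
    rw [if_neg (by omega)]
    exact hb₁ i hi


def shiftCfg (d : ℕ) (c : M.Cfg) : M.Cfg := ⟨c.q, c.ipos + d, c.tape, c.wpos⟩

def unshiftCfg (d : ℕ) (c : M.Cfg) : M.Cfg := ⟨c.q, c.ipos - d, c.tape, c.wpos⟩

theorem stepF_shift (h1 : M.OneWay) {w w' : List α} {d : ℕ} (c' : M.Cfg)
    (hr : readInp w (c'.ipos + d) = readInp w' c'.ipos)
    (h2 : min (c'.ipos + d) (w.length + 1) = min c'.ipos (w'.length + 1) + d)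
    (h3 : min (c'.ipos + d + 1) (w.length + 1) = min (c'.ipos + 1) (w'.length + 1) + d) :
    M.stepF w (M.shiftCfg d c') = Option.map (M.shiftCfg d) (M.stepF w' c') := by
  unfold stepF shiftCfg
  simp only [hr]
  cases htr : M.trans c'.q (readInp w' c'.ipos) (c'.tape c'.wpos) with
  | none => rfl
  | some r =>
    have hne := h1 _ _ _ _ htr
    simp only [Option.map_some]
    have hmv : min (mv (c'.ipos + d) r.2.2.1) (w.length + 1)
        = min (mv c'.ipos r.2.2.1) (w'.length + 1) + d := by
      cases hmo : r.2.2.1 with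
      | lt => rw [hmo] at hne; exact absurd rfl hne
      | eq => simpa [mv] using h2
      | gt => simpa [mv] using h3
    simp [Cfg.mk.injEq, hmv]

theorem runFrom_shift_small (h1 : M.OneWay) {w w' : List α} {d : ℕ} {c₀' : M.Cfg} {T : ℕ}
    (hstep : ∀ t c', t < T → M.runFrom w' c₀' t = some c' →
      readInp w (c'.ipos + d) = readInp w' c'.ipos ∧
      min (c'.ipos + d) (w.length + 1) = min c'.ipos (w'.length + 1) + d ∧
      min (c'.ipos + d + 1) (w.length + 1) = min (c'.ipos + 1) (w'.length + 1) + d) :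
    ∀ t ≤ T, M.runFrom w (M.shiftCfg d c₀') t
      = Option.map (M.shiftCfg d) (M.runFrom w' c₀' t) := by
  intro t ht
  induction t with
  | zero => rfl
  | succ t ih =>
    have ih' := ih (Nat.le_of_succ_le ht)
    rw [runFrom_succ, runFrom_succ, ih']
    cases hc : M.runFrom w' c₀' t with
    | none => rfl
    | some c' =>
      obtain ⟨hr, h2, h3⟩ := hstep t c' (by omega) hc
      simp only [Option.map_some, Option.bind_some]
      exact M.stepF_shift h1 c' hr h2 h3

theorem runFrom_shift_big (h1 : M.OneWay) {w w' : List α} {d : ℕ} {c₀ : M.Cfg} {T : ℕ}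
    (hstep : ∀ t c, t < T → M.runFrom w c₀ t = some c → d ≤ c.ipos ∧
      readInp w c.ipos = readInp w' (c.ipos - d) ∧
      min c.ipos (w.length + 1) = min (c.ipos - d) (w'.length + 1) + d ∧
      min (c.ipos + 1) (w.length + 1) = min (c.ipos - d + 1) (w'.length + 1) + d) :
    ∀ t ≤ T, M.runFrom w' (M.unshiftCfg d c₀) t
      = Option.map (M.unshiftCfg d) (M.runFrom w c₀ t) := by
  intro t ht
  induction t with
  | zero => rfl
  | succ t ih =>
    have ih' := ih (Nat.le_of_succ_le ht)
    rw [runFrom_succ, runFrom_succ, ih']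
    cases hc : M.runFrom w c₀ t with
    | none => rfl
    | some c =>
      obtain ⟨hd, hr, h2, h3⟩ := hstep t c (by omega) hc
      simp only [Option.map_some, Option.bind_some]
      have hstep' := M.stepF_shift h1 (w := w) (w' := w') (d := d) (M.unshiftCfg d c)
        (by simpa [unshiftCfg, Nat.sub_add_cancel hd] using hr)
        (by simpa [unshiftCfg, Nat.sub_add_cancel hd] using h2)
        (by simpa [unshiftCfg, Nat.sub_add_cancel hd] using h3)
      have hsc : M.shiftCfg d (M.unshiftCfg d c) = c := by
        simp [shiftCfg, unshiftCfg, Nat.sub_add_cancel hd]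
      rw [hsc] at hstep'
      rw [hstep']
      cases M.stepF w' (M.unshiftCfg d c) <;> simp [shiftCfg, unshiftCfg]


open scoped Classical

theorem runFrom_transfer0 (h1 : M.OneWay) {w₁ w₂ : List α} {m : ℕ}
    (hm₁ : m ≤ w₁.length) (hm₂ : m ≤ w₂.length)
    (hag : ∀ i, 1 ≤ i → i ≤ m → w₁[i-1]? = w₂[i-1]?)
    {T : ℕ}
    (hip : ∀ t c, t < T → M.runFrom w₁ (M.initCfg w₁) t = some c → c.ipos ≤ m) :
    ∀ t ≤ T, M.runFrom w₂ (M.initCfg w₂) t = M.runFrom w₁ (M.initCfg w₁) t := by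
  have hinit : (M.initCfg w₁).ipos ≤ w₁.length + 1 := by simp [initCfg]
  have hstep : ∀ t c, t < T → M.runFrom w₁ (M.initCfg w₁) t = some c → 0 ≤ c.ipos ∧
      readInp w₁ c.ipos = readInp w₂ (c.ipos - 0) ∧
      min c.ipos (w₁.length + 1) = min (c.ipos - 0) (w₂.length + 1) + 0 ∧
      min (c.ipos + 1) (w₁.length + 1) = min (c.ipos - 0 + 1) (w₂.length + 1) + 0 := by
    intro t c ht hc
    have hi := hip t c ht hc
    have hge : 1 ≤ c.ipos := by
      have := (M.runFrom_inv h1 hc hinit).1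
      simpa [initCfg] using this
    refine ⟨by omega, ?_, by omega, by omega⟩
    unfold readInp
    rw [if_neg (by omega), if_neg (by omega)]
    simp only [Nat.sub_zero]
    exact hag c.ipos hge hi
  have key := M.runFrom_shift_big h1 (w := w₁) (w' := w₂) (d := 0) (c₀ := M.initCfg w₁)
    (T := T) hstep
  have hunshift : ∀ c : M.Cfg, M.unshiftCfg 0 c = c := by
    intro c; cases c; simp [unshiftCfg]
  intro t ht
  have h2 := key t ht
  rw [hunshift] at h2
  have hinit2 : M.initCfg w₁ = M.initCfg w₂ := rfl
  rw [← hinit2, h2]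
  cases hrt : M.runFrom w₁ (M.initCfg w₁) t with
  | none => rfl
  | some c => simp [hunshift]

theorem reach_tape_blank {B : ℕ} (hB : ∀ w c, M.Reach w c → c.wpos < B)
    {w : List α} {c : M.Cfg} (h : M.Reach w c) : ∀ i, B ≤ i → c.tape i = M.blank := by
  obtain ⟨t, ht⟩ := h
  exact M.runFrom_blank ht (fun i _ => rfl) (fun t' c' _ h' => hB w c' ⟨t', h'⟩)

def AccWithin (w : List α) : Prop :=
  ∃ t c, M.runFrom w (M.initCfg w) t = some c ∧ c.q = M.accept ∧ c.ipos ≤ w.length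

def HitP (w : List α) (t : ℕ) : Prop :=
  ∃ c, M.runFrom w (M.initCfg w) t = some c ∧ c.ipos = w.length + 1

noncomputable def crossT (w : List α) (h : ∃ t, M.HitP w t) : ℕ := Nat.find h

noncomputable def crossCfg (w : List α) (h : ∃ t, M.HitP w t) : M.Cfg :=
  Classical.choose (Nat.find_spec h)

theorem crossCfg_spec (w : List α) (h : ∃ t, M.HitP w t) :
    M.runFrom w (M.initCfg w) (M.crossT w h) = some (M.crossCfg w h) ∧
      (M.crossCfg w h).ipos = w.length + 1 :=
  Classical.choose_spec (Nat.find_spec h)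

theorem cross_min (w : List α) (h : ∃ t, M.HitP w t) {t' : ℕ} (h' : t' < M.crossT w h) :
    ¬ M.HitP w t' := Nat.find_min h h'

def encB (B : ℕ) (c : M.Cfg) : M.Q × (Fin B → M.Γ) × Fin (B+1) :=
  ⟨c.q, fun i => c.tape i, ⟨min c.wpos B, by omega⟩⟩

def decB (B : ℕ) (e : M.Q × (Fin B → M.Γ) × Fin (B+1)) : M.Cfg :=
  ⟨e.1, 1, fun i => if h : i < B then e.2.1 ⟨i, h⟩ else M.blank, e.2.2⟩

theorem decB_encB {B : ℕ} {c : M.Cfg} (hw : c.wpos < B)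
    (hb : ∀ i, B ≤ i → c.tape i = M.blank) :
    M.decB B (M.encB B c) = ⟨c.q, 1, c.tape, c.wpos⟩ := by
  unfold decB encB
  simp only [Cfg.mk.injEq]
  refine ⟨trivial, trivial, ?_, by simp; omega⟩
  funext i
  by_cases h : i < B
  · simp [h]
  · simp [h]
    exact (hb i (by omega)).symm

def accE (B : ℕ) (e : M.Q × (Fin B → M.Γ) × Fin (B+1)) : Language α :=
  {v | ∃ t c, M.runFrom v (M.decB B e) t = some c ∧ c.q = M.accept}

noncomputable def XB (B : ℕ) (w : List α) : Option (M.Q × (Fin B → M.Γ) × Fin (B+1)) :=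
  if h : ∃ t, M.HitP w t then some (M.encB B (M.crossCfg w h)) else none

def GB (B : ℕ) : Prop × Option (M.Q × (Fin B → M.Γ) × Fin (B+1)) → Language α :=
  fun p => {v | p.1 ∨ ∃ e, p.2 = some e ∧ v ∈ M.accE B e}

theorem resid_eq (h1 : M.OneWay) {B : ℕ} (hB : ∀ w c, M.Reach w c → c.wpos < B)
    (w : List α) :
    {v : List α | w ++ v ∈ M.lang} = M.GB B (M.AccWithin w, M.XB B w) := by
  ext v
  simp only [Set.mem_setOf_eq, GB]
  have hgetag : ∀ i, 1 ≤ i → i ≤ w.length → (w ++ v)[i-1]? = w[i-1]? := by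
    intro i hi1 hi2
    have h' : i - 1 < w.length := by omega
    simp [List.getElem?_append, h']
  constructor
  · intro hv
    obtain ⟨c, ⟨t, ht⟩, hacc⟩ := (M.mem_lang_iff).mp hv
    by_cases hip : c.ipos ≤ w.length
    · left
      have htrans := M.runFrom_transfer0 h1 (w₁ := w ++ v) (w₂ := w) (m := w.length)
        (by simp) le_rfl hgetag (T := t)
        (fun t' c' ht' hc' => le_trans
          (M.runFrom_mono_t h1 (le_of_lt ht') hc' ht (by simp [initCfg])) hip)
      exact ⟨t, c, by rw [htrans t le_rfl]; exact ht, hacc, hip⟩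
    · right
      obtain ⟨t₀, ht₀T, c₀, hc₀, hc₀ip, hmin⟩ :=
        M.exists_firstHit h1 ht (v := w.length + 1) (by omega) (by omega)
      have htrans := M.runFrom_transfer0 h1 (w₁ := w ++ v) (w₂ := w) (m := w.length)
        (by simp) le_rfl hgetag (T := t₀)
        (fun t' c' ht' hc' => by have := hmin t' c' ht' hc'; omega)
      have hrw : M.runFrom w (M.initCfg w) t₀ = some c₀ := by
        rw [htrans t₀ le_rfl]; exact hc₀
      have hh : ∃ τ, M.HitP w τ := ⟨t₀, c₀, hrw, hc₀ip⟩
      have hcrossle : M.crossT w hh ≤ t₀ := Nat.find_le ⟨c₀, hrw, hc₀ip⟩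
      have hcrosseq : M.crossT w hh = t₀ := by
        by_contra hne
        have hlt : M.crossT w hh < t₀ := lt_of_le_of_ne hcrossle hne
        obtain ⟨hcspec, hcspecip⟩ := M.crossCfg_spec w hh
        rw [htrans (M.crossT w hh) (le_of_lt hlt)] at hcspec
        have := hmin (M.crossT w hh) (M.crossCfg w hh) hlt hcspec
        omega
      have hcfg_eq : M.crossCfg w hh = c₀ := by
        have hspec := (M.crossCfg_spec w hh).1
        rw [hcrosseq, hrw] at hspec
        exact (Option.some_injective _ hspec.symm)
      have hXB : M.XB B w = some (M.encB B c₀) := by rw [XB, dif_pos hh, hcfg_eq]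
      have hsuffix : M.runFrom (w ++ v) c₀ (t - t₀) = some c := by
        have h' := ht
        rw [show t = t₀ + (t - t₀) by omega, runFrom_add, hc₀] at h'
        simpa using h'
      have hreach₀ : M.Reach w c₀ := ⟨t₀, hrw⟩
      have hstep : ∀ τ c₁, τ < t - t₀ → M.runFrom (w ++ v) c₀ τ = some c₁ →
          w.length ≤ c₁.ipos ∧
          readInp (w ++ v) c₁.ipos = readInp v (c₁.ipos - w.length) ∧
          min c₁.ipos ((w ++ v).length + 1) = min (c₁.ipos - w.length) (v.length + 1) + w.length ∧
          min (c₁.ipos + 1) ((w ++ v).length + 1)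
            = min (c₁.ipos - w.length + 1) (v.length + 1) + w.length := by
        intro τ c₁ hτ hc₁
        have hinv := M.runFrom_inv h1 hc₁ (by simp only [List.length_append]; omega)
        have hge : w.length + 1 ≤ c₁.ipos := hc₀ip ▸ hinv.1
        have hle : c₁.ipos ≤ w.length + v.length + 1 := by
          simpa using hinv.2
        refine ⟨by omega, ?_, by simp only [List.length_append]; omega,
          by simp only [List.length_append]; omega⟩
        unfold readInp
        rw [if_neg (by omega), if_neg (by omega), 
          List.getElem?_append_right (by omega)]
        congr 1
        omega
      have hbig := M.runFrom_shift_big h1 (w := w ++ v) (w' := v) (d := w.length) (c₀ := c₀)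
        (T := t - t₀) hstep (t - t₀) le_rfl
      rw [hsuffix] at hbig
      refine ⟨M.encB B c₀, hXB, ⟨t - t₀, M.unshiftCfg w.length c, ?_, hacc⟩⟩
      have hdec : M.decB B (M.encB B c₀) = M.unshiftCfg w.length c₀ := by
        rw [M.decB_encB (hB _ _ hreach₀) (M.reach_tape_blank hB hreach₀)]
        unfold unshiftCfg
        rw [show c₀.ipos - w.length = 1 by omega]
      rw [hdec]
      exact hbig
  · rintro (⟨t, c, ht, hq, hip⟩ | ⟨e, hXB, hacc⟩)
    · have htrans := M.runFrom_transfer0 h1 (w₁ := w) (w₂ := w ++ v) (m := w.length)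
        le_rfl (by simp) (fun i hi1 hi2 => (hgetag i hi1 hi2).symm) (T := t)
        (fun t' c' ht' hc' => le_trans
          (M.runFrom_mono_t h1 (le_of_lt ht') hc' ht (by simp [initCfg])) hip)
      exact (M.mem_lang_iff).mpr ⟨c, ⟨t, by rw [htrans t le_rfl]; exact ht⟩, hq⟩
    · have hh : ∃ τ, M.HitP w τ := by
        by_contra h
        rw [XB, dif_neg h] at hXB
        exact nomatch hXB
      rw [XB, dif_pos hh] at hXB
      have he : e = M.encB B (M.crossCfg w hh) := (Option.some_injective _ hXB).symm
      obtain ⟨hspec1, hspec2⟩ := M.crossCfg_spec w hh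
      have hearlier : ∀ t' c', t' < M.crossT w hh →
          M.runFrom w (M.initCfg w) t' = some c' → c'.ipos ≤ w.length := by
        intro t' c' hlt hc'
        have hnh := M.cross_min w hh hlt
        have hinv := M.runFrom_inv h1 hc' (by simp [initCfg])
        by_contra hgt
        exact hnh ⟨c', hc', by omega⟩
      have htrans := M.runFrom_transfer0 h1 (w₁ := w) (w₂ := w ++ v) (m := w.length)
        le_rfl (by simp) (fun i hi1 hi2 => (hgetag i hi1 hi2).symm) (T := M.crossT w hh)
        hearlier
      have hrw₁ : M.runFrom (w ++ v) (M.initCfg (w ++ v)) (M.crossT w hh)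
          = some (M.crossCfg w hh) := by
        rw [htrans _ le_rfl]; exact hspec1
      obtain ⟨τ, c₂, hτ, hq₂⟩ := hacc
      have hreach₁ : M.Reach w (M.crossCfg w hh) := ⟨M.crossT w hh, hspec1⟩
      have hdec : M.decB B e
          = ⟨(M.crossCfg w hh).q, 1, (M.crossCfg w hh).tape, (M.crossCfg w hh).wpos⟩ := by
        rw [he]
        exact M.decB_encB (hB _ _ hreach₁) (M.reach_tape_blank hB hreach₁)
      have hstep : ∀ τ' c', τ' < τ → M.runFrom v (M.decB B e) τ' = some c' →
          readInp (w ++ v) (c'.ipos + w.length) = readInp v c'.ipos ∧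
          min (c'.ipos + w.length) ((w ++ v).length + 1)
            = min c'.ipos (v.length + 1) + w.length ∧
          min (c'.ipos + w.length + 1) ((w ++ v).length + 1)
            = min (c'.ipos + 1) (v.length + 1) + w.length := by
        intro τ' c' hlt hc'
        have hinv := M.runFrom_inv h1 hc' (by rw [hdec]; exact by simp)
        have hge : 1 ≤ c'.ipos := by
          have := hinv.1; rw [hdec] at this; exact this
        have hle : c'.ipos ≤ v.length + 1 := hinv.2
        refine ⟨?_, by simp only [List.length_append]; omega,
          by simp only [List.length_append]; omega⟩
        unfold readInp
        rw [if_neg (by omega), if_neg (by omega), 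
          List.getElem?_append_right (by omega)]
        congr 1
        omega
      have hsmall := M.runFrom_shift_small h1 (w := w ++ v) (w' := v) (d := w.length)
        (c₀' := M.decB B e) (T := τ) hstep τ le_rfl
      rw [hτ] at hsmall
      have hshift : M.shiftCfg w.length (M.decB B e) = M.crossCfg w hh := by
        rw [hdec]
        unfold shiftCfg
        rw [show (1 : ℕ) + w.length = (M.crossCfg w hh).ipos by omega]
      rw [hshift] at hsmall
      refine (M.mem_lang_iff).mpr ⟨M.shiftCfg w.length c₂, ⟨M.crossT w hh + τ, ?_⟩,
        by simpa [shiftCfg] using hq₂⟩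
      rw [runFrom_add, hrw₁]
      simpa using hsmall

theorem _root_.isRegular_of_finite_resid {α : Type} (L : Language α)
    (h : (Set.range fun w : List α => {v : List α | w ++ v ∈ L}).Finite) : L.IsRegular := by
  classical
  set resid : List α → Language α := fun w => {v : List α | w ++ v ∈ L} with hresid
  letI : Fintype ↥(Set.range resid) := h.fintype
  refine ⟨↥(Set.range resid), inferInstance, ?_, ?_⟩
  · exact
      { step := fun s a => ⟨{v | a :: v ∈ (s : Language α)}, by
          obtain ⟨w, hw⟩ := s.2
          refine ⟨w ++ [a], ?_⟩
          rw [← hw]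
          ext v
          simp only [hresid, List.append_assoc, List.singleton_append]
          exact Iff.rfl⟩
        start := ⟨resid [], ⟨[], rfl⟩⟩
        accept := {s | [] ∈ (s : Language α)} }
  · set D : DFA α ↥(Set.range resid) :=
      { step := fun s a => ⟨{v | a :: v ∈ (s : Language α)}, by
          obtain ⟨w, hw⟩ := s.2
          refine ⟨w ++ [a], ?_⟩
          rw [← hw]
          ext v
          simp only [hresid, List.append_assoc, List.singleton_append]
          exact Iff.rfl⟩
        start := ⟨resid [], ⟨[], rfl⟩⟩
        accept := {s | [] ∈ (s : Language α)} }
    have heval : ∀ (x : List α) (s : ↥(Set.range resid)),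
        ((D.evalFrom s x : ↥(Set.range resid)) : Language α) = {v | x ++ v ∈ (s : Language α)} := by
      intro x
      induction x with
      | nil => intro s; ext v; exact Iff.rfl
      | cons a x ih =>
        intro s
        show ((D.evalFrom (D.step s a) x : ↥(Set.range resid)) : Language α) = _
        rw [ih]
        ext v
        exact Iff.rfl
    ext x
    show D.evalFrom D.start x ∈ D.accept ↔ _
    constructor
    · intro hx
      have := heval x D.start
      replace this := fun y => iff_of_eq (congrArg (y ∈ ·) this)
      have h2 := (this []).mp hx
      simpa [hresid] using (show [] ++ (x ++ []) ∈ L from h2)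
    · intro hx
      have := heval x D.start
      replace this := fun y => iff_of_eq (congrArg (y ∈ ·) this)
      refine (this []).mpr ?_
      show [] ++ (x ++ []) ∈ L
      simpa [hresid] using hx

theorem lang_regular_of_bounded (h1 : M.OneWay) {B : ℕ}
    (hB : ∀ w c, M.Reach w c → c.wpos < B) : M.lang.IsRegular := by
  letI := M.finQ
  letI := M.finΓ
  apply isRegular_of_finite_resid
  have hsub : (Set.range fun w : List α => {v : List α | w ++ v ∈ M.lang})
      ⊆ Set.range (M.GB B) := by
    rintro _ ⟨w, rfl⟩
    exact ⟨(M.AccWithin w, M.XB B w), (M.resid_eq h1 hB w).symm⟩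
  exact (Set.finite_range (M.GB B)).subset hsub

theorem caseB (h1 : M.OneWay)
    (hub : ∀ S, ∃ w c, M.Reach w c ∧ S ≤ c.wpos) (S : ℕ) :
    ∃ (w : List α) (c : M.Cfg), M.Reach w c ∧ S ≤ c.wpos ∧
      w.length ≤ @Fintype.card M.Q M.finQ * (@Fintype.card M.Γ M.finΓ ^ S * (S + 1)) := by
  classical
  letI := M.finQ
  letI := M.finΓ
  have hex : ∃ n, ∃ w : List α, w.length = n ∧ ∃ c, M.Reach w c ∧ S ≤ c.wpos := by
    obtain ⟨w, c, h1', h2'⟩ := hub S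
    exact ⟨w.length, w, rfl, c, h1', h2'⟩
  obtain ⟨w, hwlen, c, hreach, hwpos⟩ := Nat.find_spec hex
  have hmin : ∀ w' : List α, w'.length < Nat.find hex → ∀ c', M.Reach w' c' → c'.wpos < S := by
    intro w' hlt c' hr
    by_contra h
    exact Nat.find_min hex hlt ⟨w', rfl, c', hr, by omega⟩
  refine ⟨w, c, hreach, hwpos, ?_⟩
  by_contra hbig
  push_neg at hbig
  set n := w.length with hn
  obtain ⟨T, hT⟩ := hreach
  have hQex : ∃ t, ∃ c', M.runFrom w (M.initCfg w) t = some c' ∧ S ≤ c'.wpos :=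
    ⟨T, c, hT, hwpos⟩
  obtain ⟨cT, hcT, hScT⟩ := Nat.find_spec hQex
  set T₀ := Nat.find hQex with hT₀
  have hwlt : ∀ t' c', t' < T₀ → M.runFrom w (M.initCfg w) t' = some c' → c'.wpos < S := by
    intro t' c' hlt hc'
    by_contra h
    exact Nat.find_min hQex hlt ⟨c', hc', by omega⟩
  have hblank : ∀ t' ≤ T₀, ∀ c', M.runFrom w (M.initCfg w) t' = some c' →
      ∀ i, S ≤ i → c'.tape i = M.blank := by
    intro t' ht' c' hc'
    exact M.runFrom_blank hc' (fun i _ => rfl) (fun u cu hu hcu => hwlt u cu (by omega) hcu)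
  have hwle : ∀ t' ≤ T₀, ∀ c', M.runFrom w (M.initCfg w) t' = some c' → c'.wpos ≤ S := by
    intro t' ht' c' hc'
    rcases Nat.lt_or_ge t' T₀ with h | h
    · exact le_of_lt (hwlt t' c' h hc')
    · cases t' with
      | zero =>
        simp at hc'
        rw [← hc']
        simp [initCfg]
      | succ u =>
        rw [runFrom_succ] at hc'
        obtain ⟨c₁, hc₁, hst⟩ := Option.bind_eq_some_iff.mp hc'
        have h₁ := hwlt u c₁ (by omega) hc₁
        have := (M.stepF_mono h1 hst (M.runFrom_inv h1 hc₁ (by simp [initCfg])).2).2.2.2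
        omega
  have hTinv := M.runFrom_inv h1 hcT (by simp [initCfg])
  have hip1 : 1 ≤ cT.ipos := by simpa [initCfg] using hTinv.1
  have hipn : cT.ipos ≤ n + 1 := hTinv.2
  by_cases hp : cT.ipos < n
  · -- truncation: shorter word reaches space S
    have hag : ∀ i, 1 ≤ i → i ≤ cT.ipos → w[i-1]? = (w.take cT.ipos)[i-1]? := by
      intro i hi1 hi2
      have h' : i - 1 < cT.ipos := by omega
      simp [List.getElem?_take, h']
    have htrans := M.runFrom_transfer0 h1 (w₁ := w) (w₂ := w.take cT.ipos) (m := cT.ipos)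
      (by omega) (by simp only [List.length_take]; omega) hag (T := T₀)
      (fun t' c' ht' hc' => M.runFrom_mono_t h1 (le_of_lt ht') hc' hcT (by simp [initCfg]))
    have hr' : M.Reach (w.take cT.ipos) cT := ⟨T₀, by rw [htrans T₀ le_rfl]; exact hcT⟩
    have := hmin (w.take cT.ipos) (by simp only [List.length_take]; omega) cT hr'
    omega
  · -- pigeonhole and cut
    have hcross : ∀ k : Fin n, ∃ t, t ≤ T₀ ∧ ∃ cv, M.runFrom w (M.initCfg w) t = some cv ∧
        cv.ipos = (k : ℕ) + 1 ∧ ∀ t' c', t' < t → M.runFrom w (M.initCfg w) t' = some c' →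
          c'.ipos < (k : ℕ) + 1 := by
      intro k
      obtain ⟨t, ht1, cv, h2, h3, h4⟩ := M.exists_firstHit h1 hcT
        (v := (k : ℕ) + 1) (by omega) (by have := k.2; omega)
      exact ⟨t, ht1, cv, h2, h3, h4⟩
    choose tt htle cc hcc hcip hcmin using hcross
    set g : Fin n → M.Q × (Fin S → M.Γ) × Fin (S + 1) :=
      fun k => ⟨(cc k).q, fun i => (cc k).tape i, ⟨min (cc k).wpos S, by omega⟩⟩ with hg
    have hcard : Fintype.card (M.Q × (Fin S → M.Γ) × Fin (S + 1)) < Fintype.card (Fin n) := by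
      rw [Fintype.card_fin]
      calc Fintype.card (M.Q × (Fin S → M.Γ) × Fin (S + 1))
          = Fintype.card M.Q * (Fintype.card M.Γ ^ S * (S + 1)) := by
            simp [Fintype.card_fun]
        _ < n := hbig
    obtain ⟨k, k', hkne, hkeq⟩ := Fintype.exists_ne_map_eq_of_card_lt g hcard
    have hex2 : ∃ a b : Fin n, (a : ℕ) < (b : ℕ) ∧ g a = g b := by
      rcases lt_trichotomy (k : ℕ) (k' : ℕ) with h | h | h
      · exact ⟨k, k', h, hkeq⟩
      · exact absurd (Fin.ext h) hkne
      · exact ⟨k', k, h, hkeq.symm⟩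
    obtain ⟨a, b, hab, hgab⟩ := hex2
    have hva : (cc a).ipos = (a : ℕ) + 1 := hcip a
    have hvb : (cc b).ipos = (b : ℕ) + 1 := hcip b
    have hbn : (b : ℕ) + 1 ≤ n := b.2
    set d := (b : ℕ) - (a : ℕ) with hd
    have hd1 : 1 ≤ d := by omega
    have hq : (cc a).q = (cc b).q := congrArg Prod.fst hgab
    have htapeF : ∀ i : Fin S, (cc a).tape i = (cc b).tape i := by
      intro i
      exact congrFun (congrArg (fun p => p.2.1) hgab) i
    have hminw : min (cc a).wpos S = min (cc b).wpos S := by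
      have := congrArg (fun p => (p.2.2 : ℕ)) hgab
      simpa using this
    have htape : (cc a).tape = (cc b).tape := by
      funext i
      by_cases hiS : i < S
      · exact htapeF ⟨i, hiS⟩
      · rw [hblank (tt a) (htle a) (cc a) (hcc a) i (by omega),
          hblank (tt b) (htle b) (cc b) (hcc b) i (by omega)]
    have hwpe : (cc a).wpos = (cc b).wpos := by
      have ha' := hwle (tt a) (htle a) (cc a) (hcc a)
      have hb' := hwle (tt b) (htle b) (cc b) (hcc b)
      omega
    have htb : M.runFrom w (cc b) (T₀ - tt b) = some cT := by
      have h' := hcT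
      rw [show T₀ = tt b + (T₀ - tt b) by have := htle b; omega, runFrom_add, hcc b] at h'
      simpa using h'
    set w' := w.take (a : ℕ) ++ w.drop (b : ℕ) with hw'
    have hta : (w.take (a : ℕ)).length = (a : ℕ) := by simp only [List.length_take]; omega
    have hlenw' : w'.length = n - d := by
      simp only [hw', List.length_append, List.length_take, List.length_drop]
      omega
    -- stage 1
    have hag1 : ∀ i, 1 ≤ i → i ≤ (a : ℕ) → w[i-1]? = w'[i-1]? := by
      intro i hi1 hi2
      have h' : i - 1 < (w.take (a : ℕ)).length := by rw [hta]; omega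
      have h'' : i - 1 < (a : ℕ) := by omega
      rw [hw', List.getElem?_append, if_pos h',
        List.getElem?_take]
      simp [h'']
    have htrans1 := M.runFrom_transfer0 h1 (w₁ := w) (w₂ := w') (m := (a : ℕ))
      (by omega) (by omega) hag1 (T := tt a)
      (fun t' c' ht' hc' => by have := hcmin a t' c' ht' hc'; omega)
    have hrun1 : M.runFrom w' (M.initCfg w') (tt a) = some (cc a) := by
      rw [htrans1 (tt a) le_rfl]; exact hcc a
    -- stage 2
    have hstep2 : ∀ t c₁, t < T₀ - tt b → M.runFrom w (cc b) t = some c₁ → d ≤ c₁.ipos ∧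
        readInp w c₁.ipos = readInp w' (c₁.ipos - d) ∧
        min c₁.ipos (w.length + 1) = min (c₁.ipos - d) (w'.length + 1) + d ∧
        min (c₁.ipos + 1) (w.length + 1) = min (c₁.ipos - d + 1) (w'.length + 1) + d := by
      intro t c₁ hlt hc₁
      have hinv := M.runFrom_inv h1 hc₁ (by omega)
      have hge : (b : ℕ) + 1 ≤ c₁.ipos := hvb ▸ hinv.1
      have hle : c₁.ipos ≤ n + 1 := hinv.2
      refine ⟨by omega, ?_, by rw [hlenw']; omega, by rw [hlenw']; omega⟩
      unfold readInp
      rw [if_neg (by omega), if_neg (by omega)]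
      rcases Nat.lt_or_ge (c₁.ipos - 1) n with hcase | hcase
      · rw [hw',
          List.getElem?_append_right (by rw [hta]; omega), List.getElem?_drop, hta]
        congr 1
        omega
      · rw [
          List.getElem?_eq_none (by omega), List.getElem?_eq_none (by rw [hlenw']; omega)]
    have hbig2 := M.runFrom_shift_big h1 (w := w) (w' := w') (d := d) (c₀ := cc b)
      (T := T₀ - tt b) hstep2 (T₀ - tt b) le_rfl
    rw [htb] at hbig2
    have hun : M.unshiftCfg d (cc b) = cc a := by
      unfold unshiftCfg
      rw [← hq, ← htape, ← hwpe]
      have hipeq : (cc b).ipos - d = (cc a).ipos := by rw [hva, hvb]; omega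
      rw [hipeq]
    have hreach' : M.Reach w' (M.unshiftCfg d cT) := by
      refine ⟨tt a + (T₀ - tt b), ?_⟩
      rw [runFrom_add, hrun1]
      rw [hun] at hbig2
      simpa using hbig2
    have hfin := hmin w' (by rw [hlenw']; omega) _ hreach'
    simp only [unshiftCfg] at hfin
    omega

end OfflineTM

/-- Hartmanis–Stearns–Lewis: if a one-way deterministic Turing machine with a separate
read-only one-way input tape and a work tape recognizes a nonregular language, then its
work-tape space complexity `s(n)` satisfies `s(n) ∉ o(log n)`. -/
theorem oneway_nonregular_space_not_o_log {α : Type} (M : OfflineTM α) (s : ℕ → ℕ)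
    (h1 : M.OneWay) (hs : M.SpaceBound s) (hnreg : ¬ M.lang.IsRegular) :
    ¬ ((fun n : ℕ => (s n : ℝ)) =o[Filter.atTop] fun n : ℕ => Real.log n) := by
  intro ho
  by_cases hbd : ∃ B, ∀ w c, M.Reach w c → c.wpos < B
  · obtain ⟨B, hB⟩ := hbd
    exact hnreg (M.lang_regular_of_bounded h1 hB)
  · push_neg at hbd
    have hub : ∀ S, ∃ w c, M.Reach w c ∧ S ≤ c.wpos := by
      intro S
      obtain ⟨w, c, h₁, h₂⟩ := hbd S
      exact ⟨w, c, h₁, by omega⟩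
    letI := M.finQ
    letI := M.finΓ
    set C : ℕ := (Fintype.card M.Q + 2) * (2 * Fintype.card M.Γ + 2) with hC
    have hC2 : 2 ≤ C := by
      calc (2:ℕ) = 1 * 2 := by omega
        _ ≤ (Fintype.card M.Q + 2) * (2 * Fintype.card M.Γ + 2) :=
            Nat.mul_le_mul (by omega) (by omega)
        _ = C := rfl
    have hbound : ∀ S n : ℕ,
        n ≤ Fintype.card M.Q * (Fintype.card M.Γ ^ S * (S + 1)) → n ≤ C ^ (S + 1) := by
      intro S n hn
      have e1 : Fintype.card M.Q ≤ C := by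
        calc Fintype.card M.Q ≤ (Fintype.card M.Q + 2) * 1 := by omega
          _ ≤ (Fintype.card M.Q + 2) * (2 * Fintype.card M.Γ + 2) :=
              Nat.mul_le_mul_left _ (by omega)
      have e2 : Fintype.card M.Γ ^ S * (S + 1) ≤ C ^ S := by
        calc Fintype.card M.Γ ^ S * (S + 1) ≤ Fintype.card M.Γ ^ S * 2 ^ S :=
              Nat.mul_le_mul_left _ (Nat.lt_two_pow_self (n := S))
          _ = (Fintype.card M.Γ * 2) ^ S := (Nat.mul_pow _ _ _).symm
          _ ≤ C ^ S := Nat.pow_le_pow_left (by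
              calc Fintype.card M.Γ * 2 ≤ 2 * Fintype.card M.Γ + 2 := by omega
                _ ≤ (Fintype.card M.Q + 2) * (2 * Fintype.card M.Γ + 2) :=
                    Nat.le_mul_of_pos_left _ (by omega)) S
      calc n ≤ Fintype.card M.Q * (Fintype.card M.Γ ^ S * (S + 1)) := hn
        _ ≤ C * C ^ S := Nat.mul_le_mul e1 e2
        _ = C ^ (S + 1) := by rw [pow_succ, Nat.mul_comm]
    have hlogC : 0 < Real.log C := Real.log_pos (by exact_mod_cast (by omega : 1 < C))
    rw [Asymptotics.isLittleO_iff] at ho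
    have heps : (0:ℝ) < 1 / (2 * Real.log C) := by positivity
    obtain ⟨N, hN⟩ := Filter.eventually_atTop.mp (ho heps)
    set S := (Finset.range (N + 1)).sup s with hS
    obtain ⟨w, cx, hreach, hwpos, hlen⟩ := M.caseB h1 hub S
    set n := w.length with hn
    have hsn : S + 1 ≤ s n := by
      have h' := hs w cx ((M.reach_iff).mpr hreach)
      rw [← hn] at h'
      omega
    have hnN : N + 1 ≤ n := by
      by_contra h
      push_neg at h
      have : s n ≤ S := Finset.le_sup (Finset.mem_range.mpr (by omega))
      omega
    have hle := hN n (by omega)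
    have hn1 : (1:ℝ) ≤ (n:ℝ) := by exact_mod_cast (show 1 ≤ n by omega)
    have hlogn : 0 ≤ Real.log n := Real.log_nonneg hn1
    rw [Real.norm_eq_abs, Real.norm_eq_abs, abs_of_nonneg (by positivity),
      abs_of_nonneg hlogn] at hle
    have hCn : (n:ℝ) ≤ (C:ℝ) ^ (S + 1) := by
      have := hbound S n hlen
      exact_mod_cast this
    have hlog2 : Real.log n ≤ (S + 1 : ℝ) * Real.log C := by
      calc Real.log n ≤ Real.log ((C:ℝ) ^ (S + 1)) := by
            rw [Real.log_le_log_iff (by linarith) (by positivity)]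
            exact hCn
      _ = (S + 1 : ℝ) * Real.log C := by
            rw [Real.log_pow]
            push_cast
            ring
    have hkey : (S + 1 : ℝ) ≤ (S + 1 : ℝ) / 2 := by
      have hsn' : (S + 1 : ℝ) ≤ (s n : ℝ) := by exact_mod_cast hsn
      have hmul : 1 / (2 * Real.log C) * Real.log n
          ≤ 1 / (2 * Real.log C) * ((S + 1 : ℝ) * Real.log C) := by
        apply mul_le_mul_of_nonneg_left hlog2 (le_of_lt heps)
      have heq : 1 / (2 * Real.log C) * ((S + 1 : ℝ) * Real.log C) = (S + 1 : ℝ) / 2 := by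
        field_simp
      linarith
    linarith
end

section
/- Every language accepted by a 1-limited automaton is regular. -/
/-! # Limited automata

A `d`-limited automaton is a one-tape nondeterministic Turing machine that works on
the portion of the tape initially containing the input, delimited by end-markers,
and that may rewrite the content of each tape cell only during the first `d` visits
to that cell; afterwards the cell content is frozen.  Following Hibbard's
convention, a move reversing the head direction is counted as a double visit for
the cell where it occurs.  The machine accepts by moving past the right end-marker
into a final state. -/

/-- The underlying machine of a limited automaton. -/
structure LimAut (α : Type) : Type 1 where
  Q : Type
  [finQ : Fintype Q]
  Γ : Type
  [finΓ : Fintype Γ]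
  embed : α → Γ
  lmark : Γ
  rmark : Γ
  blank : Γ
  init : Q
  final : Q → Prop
  /-- transitions: new state, written symbol, direction (`true` = right) -/
  trans : Q → Γ → Set (Q × Γ × Bool)

namespace LimAut

variable {α : Type} (M : LimAut α)

/-- A configuration: state, tape content (`⊳ w' ⊲`, as a list), head position,
direction of the move that brought the head here (`true` = arrived moving right),
and visit counts of all cells. -/
structure Cfg (M : LimAut α) where
  q : M.Q
  tape : List M.Γ
  head : ℕ
  dir : Bool
  visits : ℕ → ℕ

/-- The initial configuration on input `w`: tape `⊳ w ⊲`, head on cell `1`,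
which has already received its first visit. -/
def initCfg (w : List α) : Cfg M :=
  ⟨M.init, M.lmark :: w.map M.embed ++ [M.rmark], 1, true,
    fun i => if i = 1 then 1 else 0⟩

/-- One computation step of a `d`-limited automaton.  The currently scanned cell has
been visited `k` times so far (a reversal counting double); overwriting its content
with a different symbol is allowed only if `k ≤ d`.  End-markers may not be
overwritten; the head may leave the segment only by moving right past the right
end-marker (acceptance). -/
def Step (d : ℕ) : Cfg M → Cfg M → Prop := fun c c' =>
  ∃ p ∈ M.trans c.q (c.tape.getD c.head M.blank),
    let a := c.tape.getD c.head M.blank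
    let right := p.2.2
    let k := c.visits c.head + (if right = c.dir then 0 else 1)
    let newhead := if right then c.head + 1 else c.head - 1
    (p.2.1 ≠ a → k ≤ d) ∧
    (a = M.lmark ∨ a = M.rmark → p.2.1 = a) ∧
    (¬ right → c.head ≠ 0) ∧ c.head < c.tape.length ∧
    c' = ⟨p.1, c.tape.set c.head p.2.1, newhead, right,
          fun i => (Function.update c.visits c.head k) i + (if i = newhead then 1 else 0)⟩

/-- The language accepted by the `d`-limited automaton `M`: the input is accepted if
the machine moves past the right end-marker into a final state. -/
def lang (d : ℕ) : Language α :=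
  { w | ∃ c : Cfg M, Relation.ReflTransGen (M.Step d) (M.initCfg w) c ∧
          M.final c.q ∧ c.head = c.tape.length }

/-- The automaton is deterministic: at most one transition in every configuration. -/
def Deterministic : Prop := ∀ q a, (M.trans q a).Subsingleton

end LimAut

namespace LAux
variable {β : Type*}
theorem lset_self (l : List β) (i : ℕ) (h : i < l.length) (d : β) : l.set i (l.getD i d) = l := by
  rw [List.getD_eq_getElem _ _ h]
  apply List.ext_getElem <;> simp [List.getElem_set]
theorem lset_take (l : List β) (a : β) (i : ℕ) : (l.set i a).take i = l.take i := by
  apply List.ext_getElem <;> simp [List.getElem_set]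
  intro n h1 h2 h3 _; rintro rfl; omega
theorem lset_take_succ (l : List β) (a : β) (i : ℕ) (h : i < l.length) :
    (l.set i a).take (i+1) = l.take i ++ [a] := by
  apply List.ext_getElem <;> simp [List.getElem_set, List.getElem_append]
  · omega
  · intro n h1 h2; split <;> rename_i hh
    · simp [hh]
    · rw [dif_pos (by omega)]; intros; rfl
theorem lgetD_take (l : List β) (i m : ℕ) (d : β) (h : i < m) : (l.take m).getD i d = l.getD i d := by
  rcases Nat.lt_or_ge i l.length with h2 | h2
  · rw [List.getD_eq_getElem _ _ (by simp; omega), List.getD_eq_getElem _ _ h2]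
    simp [List.getElem_take]
  · rw [List.getD_eq_default _ _ (by simp; omega), List.getD_eq_default _ _ h2]
theorem lgetD_set_ne (l : List β) (a : β) (i j : ℕ) (d : β) (h : i ≠ j) :
    (l.set i a).getD j d = l.getD j d := by
  rcases Nat.lt_or_ge j l.length with h2 | h2
  · rw [List.getD_eq_getElem _ _ (by simpa), List.getD_eq_getElem _ _ h2, List.getElem_set, if_neg h]
  · rw [List.getD_eq_default _ _ (by simpa), List.getD_eq_default _ _ h2]
theorem lgetD_set_self (l : List β) (a : β) (j : ℕ) (d : β) (h : j < l.length) :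
    (l.set j a).getD j d = a := by
  rw [List.getD_eq_getElem _ _ (by simpa), List.getElem_set, if_pos rfl]
theorem lgetD_append_lt (g r : List β) (i : ℕ) (d : β) (h : i < g.length) :
    (g ++ r).getD i d = g.getD i d := by
  rw [List.getD_eq_getElem _ _ h, List.getD_eq_getElem _ _ (by simp; omega)]
  exact List.getElem_append_left h
theorem lgetD_append_self (g : List β) (b : β) (r : List β) (d : β) :
    (g ++ [b] ++ r).getD g.length d = b := by
  rw [List.getD_eq_getElem _ _ (by simp)]
  rw [List.getElem_append_left (by simp)]
  simp
theorem lgetD_append_self' (g : List β) (b : β) (d : β) :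
    (g ++ [b]).getD g.length d = b := by
  have := lgetD_append_self g b [] d; simpa using this
end LAux

open Relation

namespace LimAut
variable {α : Type} (M : LimAut α)

/-- abstract step inside a frozen region `g` (no rewriting). -/
def InStep (g : List M.Γ) : (M.Q × ℕ) → (M.Q × ℕ) → Prop := fun x y =>
  ∃ dd : Bool, (y.1, g.getD x.2 M.blank, dd) ∈ M.trans x.1 (g.getD x.2 M.blank) ∧
    x.2 < g.length ∧ (if dd then y.2 = x.2 + 1 else x.2 ≠ 0 ∧ y.2 = x.2 - 1)

/-- the transition table of a frozen region: enter at the rightmost cell, exit right. -/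
def Tab (g : List M.Γ) : M.Q → M.Q → Prop := fun p r =>
  ReflTransGen (M.InStep g) (p, g.length - 1) (r, g.length)

/-- one excursion from the frontier cell (symbol `b`) into the region with table `T`. -/
def bounce (T : M.Q → M.Q → Prop) (b : M.Γ) : M.Q → M.Q → Prop := fun p r =>
  ∃ s, (s, b, false) ∈ M.trans p b ∧ T s r

def inner (T : M.Q → M.Q → Prop) (b : M.Γ) : M.Q → M.Q → Prop := fun p r =>
  ∃ q', ReflTransGen (M.bounce T b) p q' ∧ (r, b, true) ∈ M.trans q' b

def T0 : M.Q → M.Q → Prop := fun p r => (r, M.lmark, true) ∈ M.trans p M.lmark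

theorem instep_lt {g : List M.Γ} {x y : M.Q × ℕ} (h : M.InStep g x y) : x.2 < g.length :=
  h.choose_spec.2.1

theorem rtg_instep_end {g : List M.Γ} {x y : M.Q × ℕ}
    (h : ReflTransGen (M.InStep g) x y) (hx : g.length ≤ x.2) : y = x := by
  rcases h.cases_head with heq | ⟨z, hstep, _⟩
  · exact heq.symm
  · exact absurd (M.instep_lt hstep) (by omega)

theorem instep_mono {g : List M.Γ} (r : List M.Γ) {x y : M.Q × ℕ}
    (h : M.InStep g x y) : M.InStep (g ++ r) x y := by
  obtain ⟨dd, ht, hlt, hd⟩ := h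
  rw [← LAux.lgetD_append_lt g r _ M.blank hlt] at ht
  exact ⟨dd, ht, by simp; omega, hd⟩

theorem Tab_singleton : M.Tab [M.lmark] = M.T0 := by
  funext p r
  apply propext
  constructor
  · intro h
    rcases h.cases_head with heq | ⟨y, hstep, hrest⟩
    · simp [Prod.ext_iff] at heq
    · obtain ⟨dd, ht, -, hd⟩ := hstep
      cases dd
      · simp at hd
      · simp at hd
        have hend := M.rtg_instep_end hrest (by simp [hd])
        have hy : y = (r, 1) := by simpa using hend.symm
        subst hy
        simpa [List.getD, T0] using ht
  · intro h
    exact ReflTransGen.single ⟨true, by simpa [List.getD, T0] using h, by simp, by simp⟩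

theorem Tab_append (g : List M.Γ) (b : M.Γ) (hg : 0 < g.length) :
    M.Tab (g ++ [b]) = M.inner (M.Tab g) b := by
  have hsym : (g ++ [b]).getD g.length M.blank = b := LAux.lgetD_append_self' g b M.blank
  have hsyml : ∀ i, i < g.length → (g ++ [b]).getD i M.blank = g.getD i M.blank := fun i hi =>
    LAux.lgetD_append_lt g [b] i M.blank hi
  funext p r
  apply propext
  constructor
  · intro h
    have key : ∀ x : M.Q × ℕ, ReflTransGen (M.InStep (g ++ [b])) x (r, g.length + 1) →
        (x.2 = g.length + 1 → x.1 = r) ∧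
        (x.2 = g.length → M.inner (M.Tab g) b x.1 r) ∧
        (x.2 < g.length → ∃ s, ReflTransGen (M.InStep g) x (s, g.length) ∧
          M.inner (M.Tab g) b s r) := by
      intro x hx
      induction hx using ReflTransGen.head_induction_on with
      | refl =>
        refine ⟨fun _ => rfl, by omega, by omega⟩
      | head hstep _ IH =>
        rename_i a c _
        obtain ⟨dd, ht, hlt, hd⟩ := hstep
        have hle : a.2 ≤ g.length := by simpa using Nat.lt_succ_iff.mp (by simpa using hlt)
        refine ⟨fun hEq => by omega, ?_, ?_⟩
        · -- a.2 = g.length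
          intro hEq
          cases dd
          · simp at hd
            have hc2 : c.2 = g.length - 1 := by omega
            obtain ⟨s, hpath, hin⟩ := IH.2.2 (by omega)
            have htab : M.Tab g c.1 s := by
              unfold Tab
              rw [show g.length - 1 = c.2 by omega]
              simpa using hpath
            obtain ⟨q'', hrtg, hexit⟩ := hin
            refine ⟨q'', ReflTransGen.head ⟨c.1, ?_, htab⟩ hrtg, hexit⟩
            rw [hEq] at ht; rwa [hsym] at ht
          · simp at hd
            have hc : c.1 = r := IH.1 (by omega)
            refine ⟨a.1, ReflTransGen.refl, ?_⟩
            rw [hEq, hsym] at ht; rwa [hc] at ht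
        · -- a.2 < g.length
          intro hlt2
          have hsa : (g ++ [b]).getD a.2 M.blank = g.getD a.2 M.blank := hsyml _ hlt2
          cases dd
          · simp at hd
            obtain ⟨s, hpath, hin⟩ := IH.2.2 (by omega)
            refine ⟨s, ReflTransGen.head ⟨false, ?_, hlt2, hd⟩ hpath, hin⟩
            rwa [hsa] at ht
          · simp at hd
            rcases Nat.lt_or_ge c.2 g.length with hc | hc
            · obtain ⟨s, hpath, hin⟩ := IH.2.2 hc
              refine ⟨s, ReflTransGen.head ⟨true, ?_, hlt2, hd⟩ hpath, hin⟩
              rwa [hsa] at ht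
            · have hc2 : c.2 = g.length := by omega
              have hin := IH.2.1 hc2
              refine ⟨c.1, ReflTransGen.single ⟨true, ?_, hlt2, ?_⟩, hin⟩
              · show (c.1, g.getD a.2 M.blank, true) ∈ _
                rwa [hsa] at ht
              · show g.length = a.2 + 1
                omega
    have h' : ReflTransGen (M.InStep (g ++ [b])) (p, g.length) (r, g.length + 1) := by
      have e1 : (g ++ [b]).length - 1 = g.length := by simp
      have e2 : (g ++ [b]).length = g.length + 1 := by simp
      unfold Tab at h; rw [e1, e2] at h; exact h
    exact (key _ h').2.1 rfl
  · rintro ⟨q', hrtg, hexit⟩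
    have main : ∀ y, ReflTransGen (M.bounce (M.Tab g) b) p y →
        ReflTransGen (M.InStep (g ++ [b])) (p, g.length) (y, g.length) := by
      intro y hy
      induction hy with
      | refl => exact ReflTransGen.refl
      | tail hab hbc IH =>
        rename_i u v
        obtain ⟨s, hs, htab⟩ := hbc
        have down : M.InStep (g ++ [b]) (u, g.length) (s, g.length - 1) :=
          ⟨false, by rwa [hsym], by simp, ⟨by omega, rfl⟩⟩
        have up : ReflTransGen (M.InStep (g ++ [b])) (s, g.length - 1) (v, g.length) :=
          (ReflTransGen.mono (r := M.InStep g) (fun _ _ hh => M.instep_mono [b] hh)) _ _ htab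
        exact (IH.tail down).trans up
    have exitstep : M.InStep (g ++ [b]) (q', g.length) (r, g.length + 1) :=
      ⟨true, by rwa [hsym], by simp, by simp⟩
    unfold Tab; simp only [List.length_append, List.length_singleton]
    exact (main q' hrtg).tail exitstep
end LimAut
namespace LimAut
variable {α : Type} (M : LimAut α)

def frontNFA (T : M.Q → M.Q → Prop) (b : M.Γ) (q : M.Q) : Set (M.Q × M.Γ) :=
  {x | ((x.1, x.2, true) ∈ M.trans q b ∧ ((b = M.lmark ∨ b = M.rmark) → x.2 = b)) ∨
       (x.2 = b ∧ M.inner T b q x.1)}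

/-- the simulating NFA -/
def nfa : NFA α (M.Q × (M.Q → M.Q → Prop)) where
  step := fun s a => {s' | ∃ x ∈ M.frontNFA s.2 (M.embed a) s.1, s' = (x.1, M.inner s.2 x.2)}
  start := {(M.init, M.T0)}
  accept := {s | ∃ q' pp, ReflTransGen (M.bounce s.2 M.rmark) s.1 q' ∧
      (pp, M.rmark, true) ∈ M.trans q' M.rmark ∧ M.final pp}

theorem step_out (c : Cfg M) (z : M.Q) (b' : M.Γ) (dd : Bool)
    (ht : (z, b', dd) ∈ M.trans c.q (c.tape.getD c.head M.blank))
    (h1 : b' ≠ c.tape.getD c.head M.blank →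
      c.visits c.head + (if dd = c.dir then 0 else 1) ≤ 1)
    (h2 : c.tape.getD c.head M.blank = M.lmark ∨ c.tape.getD c.head M.blank = M.rmark →
      b' = c.tape.getD c.head M.blank)
    (h3 : dd = false → c.head ≠ 0) (h4 : c.head < c.tape.length) :
    ∃ c' : Cfg M, M.Step 1 c c' ∧ c'.q = z ∧ c'.tape = c.tape.set c.head b' ∧
      c'.head = (if dd then c.head + 1 else c.head - 1) ∧ c'.dir = dd ∧
      (∀ j, c'.visits j =
        (Function.update c.visits c.head
          (c.visits c.head + (if dd = c.dir then 0 else 1))) j +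
        (if j = (if dd then c.head + 1 else c.head - 1) then 1 else 0)) := by
  refine ⟨_, ⟨(z, b', dd), ht, h1, h2, by simpa using h3, h4, rfl⟩, rfl, rfl, rfl, rfl,
    fun j => rfl⟩

/-- lift a run inside frozen region `g` to a genuine run of the machine. -/
theorem lift_instep_run {g rest : List M.Γ} {x y : M.Q × ℕ}
    (h : ReflTransGen (M.InStep g) (x : M.Q × ℕ) y) :
    ∀ c : Cfg M, c.tape = g ++ rest → c.q = x.1 → c.head = x.2 →
    ∃ c' : Cfg M, ReflTransGen (M.Step 1) c c' ∧ c'.tape = g ++ rest ∧ c'.q = y.1 ∧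
      c'.head = y.2 ∧ (∀ j, g.length < j → c'.visits j = c.visits j) := by
  induction h using ReflTransGen.head_induction_on with
  | refl =>
    intro c h1 h2 h3
    exact ⟨c, ReflTransGen.refl, h1, h2, h3, fun _ _ => rfl⟩
  | head hstep htail IH =>
    rename_i u v
    intro c hct hcq hch
    obtain ⟨dd, ht, hlt, hd⟩ := hstep
    have hlen : c.head < c.tape.length := by
      rw [hct, hch]; simp; omega
    have hsym : c.tape.getD c.head M.blank = g.getD u.2 M.blank := by
      rw [hct, hch]; exact LAux.lgetD_append_lt g rest u.2 M.blank hlt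
    have h3' : dd = false → c.head ≠ 0 := by
      intro hdd; subst hdd
      rw [hch]; exact (by simpa using hd : u.2 ≠ 0 ∧ v.2 = u.2 - 1).1
    obtain ⟨c₁, hstep1, e1, e2, e3, e4, e5⟩ :=
      M.step_out c v.1 (c.tape.getD c.head M.blank) dd
        (by rw [hsym]; rwa [hcq]) (fun hne => absurd rfl hne) (fun _ => rfl) h3' hlen
    have htape : c₁.tape = g ++ rest := by
      rw [e2, LAux.lset_self _ _ hlen, hct]
    have hhd : c₁.head = v.2 := by
      rw [e3, hch]; cases dd <;> simp at hd ⊢ <;> omega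
    obtain ⟨c', hrun, hb1, hb2, hb3, hb4⟩ := IH c₁ htape e1 hhd
    refine ⟨c', ReflTransGen.head hstep1 hrun, hb1, hb2, hb3, ?_⟩
    intro j hj
    rw [hb4 j hj, e5 j, Function.update_of_ne (by rw [hch]; omega),
      if_neg (by rw [hch]; cases dd <;> simp <;> omega)]
    simp

end LimAut
namespace LimAut
variable {α : Type} (M : LimAut α)

theorem bounce_run {g : List M.Γ} {b : M.Γ} {rest' : List M.Γ} (hg : 0 < g.length)
    {x y : M.Q} (h : ReflTransGen (M.bounce (M.Tab g) b) x y) :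
    ∀ c : Cfg M, c.tape = g ++ b :: rest' → c.q = x → c.head = g.length →
    ∃ c', ReflTransGen (M.Step 1) c c' ∧ c'.tape = g ++ b :: rest' ∧ c'.q = y ∧
      c'.head = g.length ∧ (∀ j, g.length < j → c'.visits j = c.visits j) := by
  induction h using ReflTransGen.head_induction_on with
  | refl =>
    intro c h1 h2 h3
    exact ⟨c, ReflTransGen.refl, h1, h2, h3, fun _ _ => rfl⟩
  | head hstep htail IH =>
    rename_i u v
    intro c hct hcq hch
    obtain ⟨s, hs, htab⟩ := hstep
    have hsymb : c.tape.getD c.head M.blank = b := by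
      rw [hct, hch]
      have := LAux.lgetD_append_self g b rest' M.blank
      simpa using this
    obtain ⟨c₁, hstep1, e1, e2, e3, e4, e5⟩ :=
      M.step_out c s b false (by rw [hsymb]; rwa [hcq]) (fun hne => absurd hsymb.symm hne)
        (fun _ => hsymb.symm) (fun _ => by rw [hch]; omega) (by rw [hct, hch]; simp)
    have htape1 : c₁.tape = g ++ b :: rest' := by
      rw [e2, hct, hch, List.set_append_right _ _ (le_refl _)]; simp
    obtain ⟨c₂, hrun2, f1, f2, f3, f4⟩ := M.lift_instep_run htab c₁ htape1 e1
      (by rw [e3, hch]; simp)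
    obtain ⟨c', hrun3, k1, k2, k3, k4⟩ := IH c₂ f1 f2 f3
    refine ⟨c', (ReflTransGen.head hstep1 hrun2).trans hrun3, k1, k2, k3, ?_⟩
    intro j hj
    rw [k4 j hj, f4 j hj, e5 j, Function.update_of_ne (by rw [hch]; omega),
      if_neg (by rw [hch]; simp; omega)]
    simp

theorem exit_run {g rest' : List M.Γ} {b b' : M.Γ} {p : M.Q} (c : Cfg M)
    (hct : c.tape = g ++ b :: rest') (hch : c.head = g.length)
    (ht : (p, b', true) ∈ M.trans c.q b)
    (hmark : b = M.lmark ∨ b = M.rmark → b' = b)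
    (hk : b' ≠ b → c.visits c.head = 1 ∧ c.dir = true) :
    ∃ c', M.Step 1 c c' ∧ c'.q = p ∧ c'.head = g.length + 1 ∧ c'.dir = true ∧
      c'.tape = g ++ b' :: rest' ∧
      ∀ j, g.length < j → c'.visits j = c.visits j + (if j = g.length + 1 then 1 else 0) := by
  have hsymb : c.tape.getD c.head M.blank = b := by
    rw [hct, hch]
    have := LAux.lgetD_append_self g b rest' M.blank
    simpa using this
  obtain ⟨c₁, hstep1, e1, e2, e3, e4, e5⟩ :=
    M.step_out c p b' true (by rwa [hsymb]) (by
      intro hne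
      obtain ⟨hv, hdir⟩ := hk (by rwa [hsymb] at hne)
      rw [hv, hdir]; simp) (by rw [hsymb]; exact hmark) (by simp)
      (by rw [hct, hch]; simp)
  refine ⟨c₁, hstep1, e1, by rw [e3, hch]; simp, e4, ?_, ?_⟩
  · rw [e2, hct, hch, List.set_append_right _ _ (le_refl _)]
    simp
  · intro j hj
    rw [e5 j, Function.update_of_ne (by rw [hch]; omega)]
    simp [hch]

def Real (w : List α) (i : ℕ) (s : M.Q × (M.Q → M.Q → Prop)) : Prop :=
  ∃ c : Cfg M, ReflTransGen (M.Step 1) (M.initCfg w) c ∧ c.q = s.1 ∧ c.head = i + 1 ∧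
    c.dir = true ∧ c.visits (i+1) = 1 ∧ (∀ j, i + 1 < j → c.visits j = 0) ∧
    ∃ g : List M.Γ, c.tape = g ++ (M.initCfg w).tape.drop (i+1) ∧ g.length = i + 1 ∧
      s.2 = M.Tab g

theorem tape0_length (w : List α) : (M.initCfg w).tape.length = w.length + 2 := by
  simp [initCfg]

theorem tape0_getD_embed (w : List α) (i : ℕ) (h : i < w.length) :
    (M.initCfg w).tape.getD (i+1) M.blank = M.embed w[i] := by
  show (M.lmark :: (w.map M.embed ++ [M.rmark])).getD (i+1) M.blank = _
  rw [List.getD_cons_succ, LAux.lgetD_append_lt _ _ _ _ (by simpa using h),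
    List.getD_eq_getElem _ _ (by simpa using h)]
  simp

theorem tape0_getD_rmark (w : List α) :
    (M.initCfg w).tape.getD (w.length + 1) M.blank = M.rmark := by
  show (M.lmark :: (w.map M.embed ++ [M.rmark])).getD (w.length+1) M.blank = _
  rw [List.getD_cons_succ]
  have := LAux.lgetD_append_self' (w.map M.embed) M.rmark M.blank
  simpa using this

theorem tape0_drop (w : List α) (i : ℕ) (h : i < w.length + 2) :
    (M.initCfg w).tape.drop i =
      (M.initCfg w).tape.getD i M.blank :: (M.initCfg w).tape.drop (i+1) := by
  rw [List.drop_eq_getElem_cons (by rw [tape0_length]; omega),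
    List.getD_eq_getElem _ _ (by rw [tape0_length]; omega)]

theorem real_eval (w : List α) :
    ∀ i, i ≤ w.length → ∀ s ∈ M.nfa.eval (w.take i), M.Real w i s := by
  intro i
  induction i with
  | zero =>
    intro _ s hs
    have hs' : s = (M.init, M.T0) := hs
    subst hs'
    refine ⟨M.initCfg w, ReflTransGen.refl, rfl, rfl, rfl, rfl, ?_, [M.lmark], ?_, rfl, ?_⟩
    · intro j hj
      show (if j = 1 then 1 else 0) = 0
      rw [if_neg (by omega)]
    · show M.lmark :: w.map M.embed ++ [M.rmark] = _
      simp [initCfg]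
    · exact M.Tab_singleton.symm
  | succ i IH =>
    intro hle s' hs'
    have hi : i < w.length := by omega
    rw [show w.take (i+1) = w.take i ++ [w[i]] by
        rw [List.take_succ, List.getElem?_eq_getElem hi]; rfl,
      NFA.eval_append_singleton, NFA.mem_stepSet] at hs'
    obtain ⟨s, hs, hstep⟩ := hs'
    obtain ⟨c, hrun, hq, hh, hdir, hv1, hv0, g, hct, hglen, hT⟩ := IH (by omega) s hs
    obtain ⟨x, hx, rfl⟩ := hstep
    set b := M.embed w[i] with hb
    have hct' : c.tape = g ++ b :: (M.initCfg w).tape.drop (i+2) := by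
      rw [hct, M.tape0_drop w (i+1) (by omega), M.tape0_getD_embed w i hi]
    have hch : c.head = g.length := by omega
    rcases hx with ⟨ht, hmark⟩ | ⟨hxb, hin⟩
    · obtain ⟨c', hstep', k1, k2, k3, k4, k5⟩ := M.exit_run c hct' hch
        (by rwa [hq]) hmark (fun _ => ⟨by rw [hch, hglen]; exact hv1, hdir⟩)
      refine ⟨c', hrun.tail hstep', k1, by omega, k3, ?_, ?_, g ++ [x.2], ?_, by simp; omega, ?_⟩
      · rw [k5 _ (by omega), if_pos (by omega), hv0 _ (by omega)]
      · intro j hj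
        rw [k5 _ (by omega), if_neg (by omega), hv0 _ (by omega)]
      · rw [k4]; simp
      · show M.inner s.2 x.2 = _
        rw [hT, M.Tab_append g x.2 (by omega)]
    · obtain ⟨q', hrtg, hexit⟩ := hin
      rw [hT] at hrtg
      obtain ⟨c₂, hrun2, f1, f2, f3, f4⟩ := M.bounce_run (by omega) hrtg c hct' (by rw [hq]) hch
      obtain ⟨c', hstep', k1, k2, k3, k4, k5⟩ := M.exit_run c₂ f1 f3
        (by rwa [f2]) (fun _ => rfl) (fun hne => absurd rfl hne)
      refine ⟨c', (hrun.trans hrun2).tail hstep', k1, by omega, k3, ?_, ?_, g ++ [b], ?_,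
        by simp; omega, ?_⟩
      · rw [k5 _ (by omega), if_pos (by omega), f4 _ (by omega), hv0 _ (by omega)]
      · intro j hj
        rw [k5 _ (by omega), if_neg (by omega), f4 _ (by omega), hv0 _ (by omega)]
      · rw [k4]; simp
      · show M.inner s.2 x.2 = _
        rw [hxb, hT, M.Tab_append g b (by omega)]

theorem accepts_le_lang (w : List α) (h : w ∈ M.nfa.accepts) : w ∈ M.lang 1 := by
  obtain ⟨s, hacc, hev⟩ := h
  rw [← List.take_length (l := w)] at hev
  obtain ⟨c, hrun, hq, hh, hdir, hv1, hv0, g, hct, hglen, hT⟩ :=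
    M.real_eval w w.length le_rfl s hev
  obtain ⟨q', pp, hrtg, hexit, hfin⟩ := hacc
  have hct' : c.tape = g ++ M.rmark :: [] := by
    rw [hct, M.tape0_drop w (w.length+1) (by omega), M.tape0_getD_rmark w,
      show (M.initCfg w).tape.drop (w.length+2) = [] by
        rw [← M.tape0_length w]; exact List.drop_length]
  rw [hT] at hrtg
  obtain ⟨c₂, hrun2, f1, f2, f3, f4⟩ := M.bounce_run (by omega) hrtg c hct' (by rw [hq]) (by omega)
  obtain ⟨c', hstep', k1, k2, k3, k4, k5⟩ := M.exit_run c₂ f1 f3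
    (by rwa [f2]) (fun _ => rfl) (fun hne => absurd rfl hne)
  refine ⟨c', (hrun.trans hrun2).tail hstep', by rwa [k1], ?_⟩
  rw [k2, k4]
  simp

end LimAut
namespace LimAut
variable {α : Type} (M : LimAut α)

theorem step_elim {c c' : Cfg M} (h : M.Step 1 c c') :
    ∃ z b' dd, (z, b', dd) ∈ M.trans c.q (c.tape.getD c.head M.blank) ∧
      (b' ≠ c.tape.getD c.head M.blank →
        c.visits c.head + (if dd = c.dir then 0 else 1) ≤ 1) ∧
      (c.tape.getD c.head M.blank = M.lmark ∨ c.tape.getD c.head M.blank = M.rmark →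
        b' = c.tape.getD c.head M.blank) ∧
      (dd = false → c.head ≠ 0) ∧ c.head < c.tape.length ∧
      c'.q = z ∧ c'.tape = c.tape.set c.head b' ∧
      c'.head = (if dd then c.head + 1 else c.head - 1) ∧ c'.dir = dd ∧
      ∀ j, c'.visits j = (Function.update c.visits c.head
          (c.visits c.head + (if dd = c.dir then 0 else 1))) j +
        (if j = (if dd then c.head + 1 else c.head - 1) then 1 else 0) := by
  obtain ⟨p, hp, h1, h2, h3, h4, h5⟩ := h
  subst h5
  exact ⟨p.1, p.2.1, p.2.2, hp, h1, h2, fun hdd => h3 (by simp [hdd]), h4,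
    rfl, rfl, rfl, rfl, fun j => rfl⟩

structure SimP (M : LimAut α) (w : List α) (c : Cfg M) (m : ℕ) (q : M.Q) : Prop where
  hm1 : 1 ≤ m
  hm2 : m ≤ w.length + 1
  hhead : c.head ≤ m
  hlen : c.tape.length = w.length + 2
  hfroz : ∀ i, m < i → c.tape.getD i M.blank = (M.initCfg w).tape.getD i M.blank
  hvis0 : ∀ i, m < i → c.visits i = 0
  hfm : c.tape.getD m M.blank = (M.initCfg w).tape.getD m M.blank
  h0 : c.tape.getD 0 M.blank = M.lmark
  hev : (q, M.Tab (c.tape.take m)) ∈ M.nfa.eval (w.take (m-1))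
  hv : 1 ≤ c.visits c.head
  hd0 : c.head = 0 → c.dir = false
  hvall : ∀ i, 1 ≤ i → i ≤ m → 1 ≤ c.visits i
  hcases : (c.head = m ∧
      ReflTransGen (M.bounce (M.Tab (c.tape.take m)) (c.tape.getD m M.blank)) q c.q ∧
      (c.visits m = 1 → c.q = q ∧ c.dir = true)) ∨
    (c.head < m ∧ (2 ≤ c.visits c.head ∨ c.head = 0) ∧
      ∃ q' s₁, ReflTransGen (M.bounce (M.Tab (c.tape.take m)) (c.tape.getD m M.blank)) q q' ∧
        (s₁, c.tape.getD m M.blank, false) ∈ M.trans q' (c.tape.getD m M.blank) ∧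
        ReflTransGen (M.InStep (c.tape.take m)) (s₁, m - 1) (c.q, c.head))

def Sim (w : List α) (c : Cfg M) : Prop := ∃ m q, SimP M w c m q

theorem sim_init (w : List α) : M.Sim w (M.initCfg w) := by
  have htake : (M.initCfg w).tape.take 1 = [M.lmark] := rfl
  refine ⟨1, M.init, ?_, ?_, ?_, ?_, ?_, ?_, ?_, ?_, ?_, ?_, ?_, ?_, ?_⟩
  · omega
  · omega
  · exact le_refl 1
  · exact M.tape0_length w
  · intro i _; rfl
  · intro i hi
    show (if i = 1 then 1 else 0) = 0
    rw [if_neg (by omega)]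
  · rfl
  · rfl
  · rw [htake, M.Tab_singleton]
    show _ ∈ M.nfa.eval []
    exact rfl
  · exact le_refl 1
  · intro h; simp [initCfg] at h
  · intro i h1 h2
    have : i = 1 := by omega
    subst this
    exact le_refl 1
  · left
    exact ⟨rfl, ReflTransGen.refl, fun _ => ⟨rfl, rfl⟩⟩

end LimAut
namespace LimAut
variable {α : Type} (M : LimAut α)

theorem sim_step (w : List α) {c c' : Cfg M} (hstep : M.Step 1 c c') (hsim : M.Sim w c) :
    M.Sim w c' ∨ (c'.head = c'.tape.length ∧ (M.final c'.q → w ∈ M.nfa.accepts)) := by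
  obtain ⟨m, q, S⟩ := hsim
  obtain ⟨z, b', dd, hp, h1, h2, h3, h4, eq, etape, ehead, edir, evis⟩ := M.step_elim hstep
  have hm1 := S.hm1
  have hm2 := S.hm2
  have hhd := S.hhead
  have hlen := S.hlen
  have hv := S.hv
  have evis' : ∀ j, c'.visits j = Function.update c.visits c.head
      (c.visits c.head + (if dd = c.dir then 0 else 1)) j +
      (if j = c'.head then 1 else 0) := by
    intro j; rw [evis j, ← ehead]
  have hvmono : ∀ j, c.visits j ≤ c'.visits j := by
    intro j; rw [evis' j]
    rcases eq_or_ne j c.head with rfl | hne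
    · rw [Function.update_self]; split <;> omega
    · rw [Function.update_of_ne hne]; split <;> omega
  have hglen : (c.tape.take m).length = m := by
    rw [List.length_take, S.hlen]; omega
  rcases S.hcases with ⟨hhm, hrtg, hfresh⟩ | ⟨hlt, hv2, q', s₁, hrtg, hs1, hpath⟩
  -- ====================== CASE H : head at the frontier ======================
  · have hsymm : c.tape.getD c.head M.blank = c.tape.getD m M.blank := by rw [hhm]
    rw [hsymm] at hp h1 h2
    have hvm : 1 ≤ c.visits m := by have := S.hv; rwa [hhm] at this
    cases dd
    · -- ---------- move left from the frontier ----------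
      have hb' : b' = c.tape.getD m M.blank := by
        by_contra hne
        have hk := h1 hne
        rw [hhm] at hk
        rcases Nat.lt_or_ge (c.visits m) 2 with hv | hv
        · have h1v : c.visits m = 1 := by omega
          obtain ⟨-, hdir⟩ := hfresh h1v
          rw [hdir, h1v] at hk
          simp at hk
        · omega
      have htape' : c'.tape = c.tape := by
        rw [etape, hb', ← hsymm]
        exact LAux.lset_self _ _ h4 M.blank
      have ehead' : c'.head = m - 1 := by rw [ehead, hhm]; simp
      left
      refine ⟨m, q, S.hm1, S.hm2, by omega, by rw [htape']; exact S.hlen, ?_, ?_,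
        by rw [htape']; exact S.hfm, by rw [htape']; exact S.h0,
        by rw [htape']; exact S.hev, ?_, fun _ => edir, ?_, ?_⟩
      · intro i hi; rw [htape']; exact S.hfroz i hi
      · intro i hi
        rw [evis' i, Function.update_of_ne (by omega), if_neg (by omega), S.hvis0 i hi]
      · rw [ehead', evis' (m-1), Function.update_of_ne (by omega), if_pos ehead'.symm]
        omega
      · intro i h1i h2i
        exact le_trans (S.hvall i h1i h2i) (hvmono i)
      · right
        rw [htape', ehead', eq]
        refine ⟨by omega, ?_, c.q, z, hrtg, by rwa [hb'] at hp, ReflTransGen.refl⟩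
        rcases eq_or_ne m 1 with rfl | hm1
        · right; rfl
        · left
          rw [evis' (m-1), Function.update_of_ne (by omega), if_pos ehead'.symm]
          have := S.hvall (m-1) (by omega) (by omega)
          omega
    · -- ---------- move right from the frontier ----------
      have ehead' : c'.head = m + 1 := by rw [ehead, hhm]; simp
      rcases Nat.lt_or_ge w.length m with hm | hm
      · -- m = w.length + 1 : moving past the right end-marker
        have hmw : m = w.length + 1 := by have := S.hm2; omega
        have hgm : c.tape.getD m M.blank = M.rmark := by
          rw [S.hfm, hmw]; exact M.tape0_getD_rmark w
        have hb' : b' = M.rmark := by rw [← hgm]; exact h2 (Or.inr hgm)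
        right
        constructor
        · rw [ehead', etape, List.length_set, S.hlen]; omega
        · intro hfin
          refine ⟨(q, M.Tab (c.tape.take m)), ⟨c.q, z, ?_, ?_, ?_⟩, ?_⟩
          · rwa [hgm] at hrtg
          · rw [hgm] at hp; rwa [hb'] at hp
          · rwa [eq] at hfin
          · have hev := S.hev
            have : w.take (m-1) = w := by rw [hmw]; simp
            rwa [this] at hev
      · -- m ≤ w.length : the frontier advances
        have hb : c.tape.getD m M.blank = M.embed (w[m-1]'(by omega)) := by
          have h2' := M.tape0_getD_embed w (m-1) (by omega)
          rw [show m - 1 + 1 = m by omega] at h2'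
          rw [S.hfm, h2']
        have hfr : (z, b') ∈ M.frontNFA (M.Tab (c.tape.take m)) (M.embed (w[m-1]'(by omega))) q := by
          rw [← hb]
          by_cases hbe : b' = c.tape.getD m M.blank
          · right
            exact ⟨hbe, c.q, hrtg, by rwa [hbe] at hp⟩
          · left
            have hk := h1 hbe
            cases hcd : c.dir
            · rw [hcd] at hk; simp at hk; omega
            · rw [hcd] at hk; simp at hk
              have h1v : c.visits m = 1 := by rw [hhm] at hk; omega
              obtain ⟨hcq, -⟩ := hfresh h1v
              exact ⟨by rwa [hcq] at hp, h2⟩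
        have htk : w.take m = w.take (m-1) ++ [w[m-1]'(by omega)] := by
          conv_lhs => rw [show m = m - 1 + 1 by omega]
          rw [List.take_succ, List.getElem?_eq_getElem (by omega)]
          rfl
        have he' : (z, M.inner (M.Tab (c.tape.take m)) b') ∈ M.nfa.eval (w.take m) := by
          rw [htk, NFA.eval_append_singleton, NFA.mem_stepSet]
          exact ⟨(q, M.Tab (c.tape.take m)), S.hev, ⟨(z, b'), hfr, rfl⟩⟩
        have htake' : c'.tape.take (m+1) = c.tape.take m ++ [b'] := by
          rw [etape, hhm]
          exact LAux.lset_take_succ _ _ _ (by rw [S.hlen]; omega)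
        have hTab' : M.Tab (c'.tape.take (m+1)) = M.inner (M.Tab (c.tape.take m)) b' := by
          rw [htake', M.Tab_append _ _ (by omega)]
        left
        refine ⟨m+1, z, by omega, by omega, by omega, ?_, ?_, ?_, ?_, ?_, ?_, ?_, ?_, ?_, ?_⟩
        · rw [etape, List.length_set]; exact S.hlen
        · intro i hi
          rw [etape, hhm, LAux.lgetD_set_ne _ _ _ _ _ (by omega)]
          exact S.hfroz i (by omega)
        · intro i hi
          rw [evis' i, Function.update_of_ne (by omega), if_neg (by omega), S.hvis0 i (by omega)]
        · rw [etape, hhm, LAux.lgetD_set_ne _ _ _ _ _ (by omega)]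
          exact S.hfroz (m+1) (by omega)
        · rw [etape, hhm, LAux.lgetD_set_ne _ _ _ _ _ (by omega)]
          exact S.h0
        · rw [show m + 1 - 1 = m by omega, hTab']
          exact he'
        · rw [ehead', evis' (m+1), Function.update_of_ne (by omega), if_pos ehead'.symm]
          omega
        · intro hz; rw [ehead'] at hz; omega
        · intro i h1i h2i
          rcases Nat.lt_or_ge i (m+1) with hi | hi
          · exact le_trans (S.hvall i h1i (by omega)) (hvmono i)
          · have : i = m + 1 := by omega
            subst this
            rw [evis' (m+1), Function.update_of_ne (by omega), if_pos ehead'.symm]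
            omega
        · left
          rw [ehead', eq]
          exact ⟨rfl, ReflTransGen.refl, fun _ => ⟨rfl, edir⟩⟩
  -- ====================== CASE I : head inside the frozen region ======================
  · have hb' : b' = c.tape.getD c.head M.blank := by
      by_contra hne
      have hk := h1 hne
      rcases hv2 with hv | hz
      · omega
      · have hdir := S.hd0 hz
        rw [hdir] at hk
        cases dd
        · exact h3 rfl hz
        · simp at hk
          have := S.hv
          omega
    have htape' : c'.tape = c.tape := by
      rw [etape, hb']
      exact LAux.lset_self _ _ h4 M.blank
    have hble : c'.head ≤ m := by
      rw [ehead]; split <;> omega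
    have ehr : c'.head = c.head + 1 ∨ (c.head ≠ 0 ∧ c'.head = c.head - 1) := by
      cases dd
      · exact Or.inr ⟨h3 rfl, by rw [ehead]; simp⟩
      · exact Or.inl (by rw [ehead]; simp)
    have ehne : c'.head ≠ c.head := by rcases ehr with h | h <;> omega
    have newstep : M.InStep (c.tape.take m) (c.q, c.head) (z, c'.head) := by
      refine ⟨dd, ?_, by omega, ?_⟩
      · rw [LAux.lgetD_take _ _ _ _ hlt]
        rw [hb'] at hp
        exact hp
      · cases dd
        · exact ⟨h3 rfl, by rw [ehead]; simp⟩
        · show c'.head = c.head + 1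
          rw [ehead]; simp
    have hpath' : ReflTransGen (M.InStep (c.tape.take m)) (s₁, m-1) (z, c'.head) :=
      hpath.tail newstep
    left
    rcases Nat.lt_or_ge c'.head m with hlt' | hge
    · -- still inside : stay in case I
      refine ⟨m, q, S.hm1, S.hm2, by omega, by rw [htape']; exact S.hlen, ?_, ?_,
        by rw [htape']; exact S.hfm, by rw [htape']; exact S.h0,
        by rw [htape']; exact S.hev, ?_, ?_, ?_, ?_⟩
      · intro i hi; rw [htape']; exact S.hfroz i hi
      · intro i hi
        rw [evis' i, Function.update_of_ne (by omega), if_neg (by omega), S.hvis0 i hi]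
      · rw [evis' c'.head, Function.update_of_ne ehne, if_pos rfl]
        omega
      · intro hz
        rw [edir]
        cases dd
        · rfl
        · rw [ehead] at hz; simp at hz
      · intro i h1i h2i
        exact le_trans (S.hvall i h1i h2i) (hvmono i)
      · right
        rw [htape', eq]
        refine ⟨hlt', ?_, q', s₁, hrtg, hs1, hpath'⟩
        rcases Nat.eq_zero_or_pos c'.head with hz | hpos
        · right; exact hz
        · left
          rw [evis' c'.head, Function.update_of_ne ehne, if_pos rfl]
          have := S.hvall c'.head hpos (by omega)
          omega
    · -- the head returns to the frontier : back to case H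
      have hhm' : c'.head = m := by omega
      have htab : M.Tab (c.tape.take m) s₁ z := by
        unfold Tab
        rw [hglen]
        rw [hhm'] at hpath'
        exact hpath'
      refine ⟨m, q, S.hm1, S.hm2, by omega, by rw [htape']; exact S.hlen, ?_, ?_,
        by rw [htape']; exact S.hfm, by rw [htape']; exact S.h0,
        by rw [htape']; exact S.hev, ?_, ?_, ?_, ?_⟩
      · intro i hi; rw [htape']; exact S.hfroz i hi
      · intro i hi
        rw [evis' i, Function.update_of_ne (by omega), if_neg (by omega), S.hvis0 i hi]
      · rw [evis' c'.head, Function.update_of_ne ehne, if_pos rfl]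
        omega
      · intro hz; omega
      · intro i h1i h2i
        exact le_trans (S.hvall i h1i h2i) (hvmono i)
      · left
        rw [htape', hhm', eq]
        refine ⟨rfl, hrtg.tail ⟨s₁, hs1, htab⟩, ?_⟩
        intro hone
        exfalso
        rw [evis' m, Function.update_of_ne (by omega), if_pos (by omega)] at hone
        have := S.hvall m (by omega) (by omega)
        omega
end LimAut

namespace LimAut
variable {α : Type} (M : LimAut α)

theorem sim_reach (w : List α) {c : Cfg M}
    (h : ReflTransGen (M.Step 1) (M.initCfg w) c) :
    M.Sim w c ∨ (c.head = c.tape.length ∧ (M.final c.q → w ∈ M.nfa.accepts)) := by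
  induction h with
  | refl => exact Or.inl (M.sim_init w)
  | tail hab hbc IH =>
    rcases IH with hsim | ⟨hd, -⟩
    · exact M.sim_step w hbc hsim
    · obtain ⟨p, hp, h1, h2, h3, h4, h5⟩ := hbc
      omega

theorem lang_le_accepts (w : List α) (h : w ∈ M.lang 1) : w ∈ M.nfa.accepts := by
  obtain ⟨c, hrun, hfin, hhead⟩ := h
  rcases M.sim_reach w hrun with ⟨m, q, S⟩ | ⟨-, hacc⟩
  · exfalso
    have h1 := S.hhead
    have h2 := S.hm2
    have h3 := S.hlen
    omega
  · exact hacc hfin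

end LimAut


/-- Wagner–Wechsung: every language accepted by a 1-limited automaton is regular. -/
theorem one_limited_regular {α : Type} (M : LimAut α) : (M.lang 1).IsRegular := by
  classical
  letI := M.finQ
  letI : DecidableEq M.Q := Classical.decEq _
  have heq : M.nfa.accepts = M.lang 1 := by
    ext w
    exact ⟨fun h => M.accepts_le_lang w h, fun h => M.lang_le_accepts w h⟩
  refine ⟨Set (M.Q × (M.Q → M.Q → Prop)), inferInstance, M.nfa.toDFA, ?_⟩
  rw [NFA.toDFA_correct, heq]
end

section
/- For every n, every deterministic finite automaton accepting the language K_n = {x₁⋯x_k x : x_i, x ∈ {0,1}ⁿ, at least n indices i satisfy x_i = x} requires a number of states doubly exponential in n. -/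
/-- `Kn n` is the set of strings over `{0,1}` that are concatenations
`x₁ x₂ ⋯ x_k x` of blocks of length `n` such that at least `n` of the blocks
`x₁, …, x_k` are equal to the last block `x`. -/
def Kn (n : ℕ) : Language Bool :=
  { w | ∃ (blocks : List (List Bool)) (x : List Bool),
      (∀ b ∈ blocks, b.length = n) ∧ x.length = n ∧
      w = blocks.flatten ++ x ∧ n ≤ (blocks.filter (· = x)).length }

namespace KnAux

/-- Uniqueness of a same-length block list with a given flattening. -/
lemma blocks_unique {n : ℕ} : ∀ (b1 b2 : List (List Bool)),
    (∀ b ∈ b1, b.length = n) → (∀ b ∈ b2, b.length = n) →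
    b1.length = b2.length → b1.flatten = b2.flatten → b1 = b2 := by
  intro b1
  induction b1 with
  | nil =>
    intro b2 _ _ hlen _
    cases b2 with
    | nil => rfl
    | cons b t => simp at hlen
  | cons a t ih =>
    intro b2 h1 h2 hlen hfl
    cases b2 with
    | nil => simp at hlen
    | cons a' t' =>
      simp only [List.flatten_cons] at hfl
      have ha : a.length = a'.length := by
        rw [h1 a (by simp), h2 a' (by simp)]
      obtain ⟨haa, htt⟩ := List.append_inj hfl ha
      subst haa
      have := ih t' (fun b hb => h1 b (by simp [hb])) (fun b hb => h2 b (by simp [hb]))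
        (by simpa using hlen) htt
      rw [this]

lemma flatten_length {n : ℕ} (b : List (List Bool)) (h : ∀ x ∈ b, x.length = n) :
    b.flatten.length = n * b.length := by
  induction b with
  | nil => simp
  | cons a t ih =>
    simp only [List.flatten_cons, List.length_append, h a (by simp),
      ih (fun x hx => h x (by simp [hx])), List.length_cons]
    ring

lemma decomp_unique {n : ℕ} (hn : 0 < n) (b1 b2 : List (List Bool)) (x1 x2 : List Bool)
    (h1 : ∀ b ∈ b1, b.length = n) (h2 : ∀ b ∈ b2, b.length = n)
    (hx1 : x1.length = n) (hx2 : x2.length = n)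
    (heq : b1.flatten ++ x1 = b2.flatten ++ x2) : b1 = b2 ∧ x1 = x2 := by
  have hl : b1.flatten.length + x1.length = b2.flatten.length + x2.length := by
    have := congrArg List.length heq; simpa using this
  rw [hx1, hx2, flatten_length b1 h1, flatten_length b2 h2] at hl
  have hlen : b1.length = b2.length :=
    Nat.eq_of_mul_eq_mul_left hn (by omega)
  have hfl : b1.flatten.length = b2.flatten.length := by
    rw [flatten_length b1 h1, flatten_length b2 h2, hlen]
  obtain ⟨hA, hB⟩ := List.append_inj heq hfl
  exact ⟨blocks_unique b1 b2 h1 h2 hlen hA, hB⟩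

/-- counting filter of a flatMap of replicates over a nodup list -/
lemma count_flatMap {n : ℕ} (x : List Bool) : ∀ (l : List (List Bool)), l.Nodup →
    ((l.flatMap (fun y => List.replicate n y)).filter (· = x)).length
      = if x ∈ l then n else 0 := by
  intro l
  induction l with
  | nil => simp
  | cons a t ih =>
    intro hnd
    rw [List.flatMap_cons, List.filter_append, List.length_append,
      List.filter_replicate, ih hnd.of_cons]
    by_cases hax : a = x
    · subst hax
      have hxt : a ∉ t := hnd.notMem
      simp [hxt]
    · have hd : (decide (a = x)) = false := by simp [hax]
      have hxa : ¬ x = a := fun h => hax h.symm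
      simp [hd, hxa]

open Mathlib in
noncomputable def wS {n : ℕ} (S : Finset (List.Vector Bool n)) : List Bool :=
  ((S.toList.map List.Vector.toList).flatMap (fun y => List.replicate n y)).flatten

open Mathlib in
lemma wS_mem_iff {n : ℕ} (hn : 0 < n) (S : Finset (List.Vector Bool n)) (v : List.Vector Bool n) :
    wS S ++ v.toList ∈ Kn n ↔ v ∈ S := by
  set l : List (List Bool) := S.toList.map List.Vector.toList with hl
  have hndl : l.Nodup := (S.nodup_toList).map List.Vector.toList_injective
  have hlens : ∀ b ∈ l.flatMap (fun y => List.replicate n y), b.length = n := by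
    intro b hb
    simp only [List.mem_flatMap, hl, List.mem_map] at hb
    obtain ⟨y, ⟨u, _, rfl⟩, hby⟩ := hb
    rw [List.eq_of_mem_replicate hby]
    exact List.Vector.toList_length u
  constructor
  · rintro ⟨blocks, x, hb, hx, heq, hcount⟩
    obtain ⟨hbeq, hxeq⟩ := decomp_unique hn _ blocks _ x hlens hb
      (List.Vector.toList_length v) hx heq
    rw [← hbeq, ← hxeq] at hcount
    rw [count_flatMap _ l hndl] at hcount
    by_cases hm : v.toList ∈ l
    · simp only [hl, List.mem_map] at hm
      obtain ⟨u, hu, huv⟩ := hm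
      exact Finset.mem_toList.mp (List.Vector.toList_injective huv ▸ hu)
    · simp [hm] at hcount; omega
  · intro hv
    refine ⟨l.flatMap (fun y => List.replicate n y), v.toList, hlens,
      List.Vector.toList_length v, rfl, ?_⟩
    rw [count_flatMap _ l hndl]
    have : v.toList ∈ l := by
      simp only [hl, List.mem_map]
      exact ⟨v, Finset.mem_toList.mpr hv, rfl⟩
    simp [this]

end KnAux

/-- Every deterministic finite automaton accepting `K_n` requires a number of states
doubly exponential in `n`: there is a constant `c > 0` such that, for all
sufficiently large `n`, every DFA for `K_n` has at least `2^(2^(c·n))` states. -/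
theorem Kn_dfa_doubly_exponential :
    ∃ c : ℝ, 0 < c ∧ ∀ᶠ n : ℕ in Filter.atTop,
      ∀ (σ : Type) (_ : Fintype σ) (D : DFA Bool σ), D.accepts = Kn n →
        (2 : ℝ) ^ ((2 : ℝ) ^ (c * n)) ≤ Fintype.card σ := by
  classical
  refine ⟨1, one_pos, ?_⟩
  filter_upwards [Filter.eventually_ge_atTop 1] with n hn
  intro σ _ D hD
  have hn0 : 0 < n := hn
  -- injective map from subsets of vectors to states
  have hinj : Function.Injective
      (fun S : Finset (List.Vector Bool n) => D.eval (KnAux.wS S)) := by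
    intro S T hST
    ext v
    have key : ∀ S : Finset (List.Vector Bool n),
        (v ∈ S ↔ D.evalFrom (D.eval (KnAux.wS S)) v.toList ∈ D.accept) := by
      intro S
      rw [← (KnAux.wS_mem_iff hn0 S v), ← hD, DFA.mem_accepts]
      unfold DFA.eval
      rw [DFA.evalFrom_of_append]
    have hST' : D.eval (KnAux.wS S) = D.eval (KnAux.wS T) := hST
    rw [key S, key T, hST']
  have hcard : 2 ^ 2 ^ n ≤ Fintype.card σ := by
    calc 2 ^ 2 ^ n = Fintype.card (Finset (List.Vector Bool n)) := by
          simp [Fintype.card_finset, card_vector]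
      _ ≤ Fintype.card σ := Fintype.card_le_of_injective _ hinj
  have h1 : (2 : ℝ) ^ ((1 : ℝ) * n) = ((2 ^ n : ℕ) : ℝ) := by
    rw [one_mul, Real.rpow_natCast]; push_cast; ring
  rw [h1, Real.rpow_natCast]
  calc (2 : ℝ) ^ (2 ^ n : ℕ) = ((2 ^ 2 ^ n : ℕ) : ℝ) := by push_cast; ring
    _ ≤ Fintype.card σ := by exact_mod_cast hcard
end
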